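/- arXiv:2308.00668 — 9 statements merged into one kernel-verified Lean document; each statement's English description precedes it below -/
import Mathlib

section
/- Let N > 2 be an integer, let δ, φ ∈ ℤ/Nℤ, and let G be a subgroup of GL(2, ℤ/Nℤ). Suppose that G contains c₁ = [[−1,0],[φ,1]], or that φ = 0 and G contains c_ε = [[−ε,0],[0,ε]] for some ε ∈ {1,−1}. If G also contains a matrix c_{δ,φ}(a,b) = [[a+bφ, b],[δb, a]] for some a, b ∈ ℤ/Nℤ with b a unit of ℤ/Nℤ, then G is not abelian. -/
/-!
Both `c₁` and `c_ε` have the shape `[[-e, 0], [f, e]]` with `e` a unit. The `(0,1)` entries of its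
products with `c_{δ,φ}(a,b)` in the two orders are `-e * b` and `b * e`, so commuting forces
`2 * e * b = 0`, impossible since `e`, `b` are units and `2 ≠ 0` in `ℤ/Nℤ` for `N > 2`.
-/

/-- The matrix `c_{δ,φ}(a,b) = [[a+bφ, b],[δb, a]]` over `ℤ/Nℤ`. -/
def cMat (N : ℕ) (δ φ a b : ZMod N) : Matrix (Fin 2) (Fin 2) (ZMod N) :=
  !![a + b * φ, b; δ * b, a]

theorem ZMod.two_ne_zero_of_two_lt {N : ℕ} (hN : 2 < N) : (2 : ZMod N) ≠ 0 := by
  have : ((2 : ℕ) : ZMod N) ≠ 0 := by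
    rw [Ne, ZMod.natCast_eq_zero_iff]
    exact fun h => absurd (Nat.le_of_dvd two_pos h) (by omega)
  exact_mod_cast this

theorem Matrix.not_commute_lowerTriangular_of_isUnit {R : Type*} [CommRing R]
    (h2 : (2 : R) ≠ 0) {e b : R} (he : IsUnit e) (hb : IsUnit b) (f x y z : R) :
    ¬ Commute !![-e, 0; f, e] !![x, b; y, z] := by
  intro hcomm
  have hentry := congrFun (congrFun hcomm.eq 0) 1
  simp only [Matrix.mul_apply, Fin.sum_univ_two, Matrix.of_apply, Matrix.cons_val',
    Matrix.cons_val_zero, Matrix.cons_val_one, Matrix.empty_val', Matrix.cons_val_fin_one] at hentry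
  have : 2 * (e * b) = 0 := by linear_combination -hentry
  exact h2 ((he.mul hb).mul_left_eq_zero.mp this)

theorem exists_mem_lowerTriangular_of_c1_or_cε {N : ℕ} {φ : ZMod N}
    {G : Subgroup (GL (Fin 2) (ZMod N))}
    (h1 : (∃ g ∈ G, (g : Matrix (Fin 2) (Fin 2) (ZMod N)) = !![-1, 0; φ, 1]) ∨
      (φ = 0 ∧ ∃ ε : ZMod N, (ε = 1 ∨ ε = -1) ∧
        ∃ g ∈ G, (g : Matrix (Fin 2) (Fin 2) (ZMod N)) = !![-ε, 0; 0, ε])) :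
    ∃ g ∈ G, ∃ e f : ZMod N, IsUnit e ∧
      (g : Matrix (Fin 2) (Fin 2) (ZMod N)) = !![-e, 0; f, e] := by
  rcases h1 with ⟨g, hg, hgval⟩ | ⟨-, ε, hε, g, hg, hgval⟩
  · exact ⟨g, hg, 1, φ, isUnit_one, hgval⟩
  · refine ⟨g, hg, ε, 0, ?_, hgval⟩
    rcases hε with rfl | rfl
    exacts [isUnit_one, isUnit_one.neg]

theorem nonabelian_of_c1_and_unit_cartan (N : ℕ) (hN : 2 < N) (δ φ : ZMod N)
    (G : Subgroup (GL (Fin 2) (ZMod N)))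
    (h1 : (∃ g ∈ G, (g : Matrix (Fin 2) (Fin 2) (ZMod N)) = !![-1, 0; φ, 1]) ∨
      (φ = 0 ∧ ∃ ε : ZMod N, (ε = 1 ∨ ε = -1) ∧
        ∃ g ∈ G, (g : Matrix (Fin 2) (Fin 2) (ZMod N)) = !![-ε, 0; 0, ε]))
    (h2 : ∃ a b : ZMod N, IsUnit b ∧
      ∃ g ∈ G, (g : Matrix (Fin 2) (Fin 2) (ZMod N)) = cMat N δ φ a b) :
    ¬ (∀ x ∈ G, ∀ y ∈ G, x * y = y * x) := by
  intro hab
  obtain ⟨g, hg, e, f, he, hgval⟩ := exists_mem_lowerTriangular_of_c1_or_cε h1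
  obtain ⟨a, b, hb, c, hc, hcval⟩ := h2
  have hcomm : Commute (g : Matrix (Fin 2) (Fin 2) (ZMod N)) c := by
    simp only [Commute, SemiconjBy, ← Units.val_mul, hab g hg c hc]
  rw [hgval, hcval, cMat] at hcomm
  exact Matrix.not_commute_lowerTriangular_of_isUnit (ZMod.two_ne_zero_of_two_lt hN) he hb
    f _ _ _ hcomm
end

section
/- Let N ≥ 2 be an integer, let δ, φ ∈ ℤ, let p be a prime and e ≥ 1 an integer with p^e dividing N. Then the reduction-mod-p^e map GL(2, ℤ/Nℤ) → GL(2, ℤ/p^eℤ) maps the subgroup N_{δ,φ}(N) (formed with δ, φ reduced mod N) surjectively onto the subgroup N_{δ,φ}(p^e) (formed with δ, φ reduced mod p^e). -/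
/-- The Cartan subgroup `C_{δ,φ}(N)` as a subset of `GL(2, ℤ/Nℤ)`. -/
def cartanSet (N : ℕ) (δ φ : ZMod N) : Set (GL (Fin 2) (ZMod N)) :=
  {g | ∃ a b : ZMod N, (g : Matrix (Fin 2) (Fin 2) (ZMod N)) = cMat N δ φ a b}

/-- The group `N_{δ,φ}(N)`, generated by the Cartan subgroup together with
`c₁ = [[−1,0],[φ,1]]`. -/
def normalizerGroup (N : ℕ) (δ φ : ZMod N) : Subgroup (GL (Fin 2) (ZMod N)) :=
  Subgroup.closure (cartanSet N δ φ ∪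
    {g | (g : Matrix (Fin 2) (Fin 2) (ZMod N)) = !![-1, 0; φ, 1]})

/-! Since the image of a closure is the closure of the image, it suffices that reduction maps
the generators of `N_{δ,φ}(N)` onto those of `N_{δ,φ}(p^e)`; only the lifting of a Cartan
element `c(a₀, b₀)` needs an idea. Write `N = p^k m` with `p ∤ m` and lift `a₀, b₀` by the Chinese
remainder theorem to `a, b` modulo `N` with `a ≡ 1` and `b ≡ 0` modulo `m`. Then `det c(a, b)`
reduces to the unit `det c(a₀, b₀)` modulo `p` and to `1` modulo every prime of `m`, so it is a
unit modulo `N`. -/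

open Matrix

namespace ZMod

lemma isUnit_of_forall_prime_dvd {N : ℕ} [NeZero N] (x : ZMod N)
    (h : ∀ q, q.Prime → ∀ hq : q ∣ N, castHom hq (ZMod q) x ≠ 0) : IsUnit x := by
  rw [← natCast_zmod_val x, isUnit_iff_coprime]
  refine Nat.coprime_of_dvd fun q hq hqx hqN => h q hq hqN ?_
  rwa [← natCast_zmod_val x, map_natCast, natCast_eq_zero_iff]

lemma exists_castHom_eq_of_coprime {M m N : ℕ} (hcop : M.Coprime m) (hdvd : M * m ∣ N)
    (x : ZMod M) (y : ZMod m) :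
    ∃ z : ZMod N, castHom (dvd_of_mul_right_dvd hdvd) _ z = x ∧
      castHom (dvd_of_mul_left_dvd hdvd) _ z = y := by
  obtain ⟨z, hz⟩ := castHom_surjective hdvd ((chineseRemainder hcop).symm (x, y))
  let crt : ZMod N →+* ZMod M × ZMod m := (chineseRemainder hcop).toRingHom.comp (castHom hdvd _)
  have hcrt : crt z = (x, y) := by simp [crt, hz]
  exact ⟨z, (RingHom.congr_fun (RingHom.ext_zmod _ ((RingHom.fst _ _).comp crt)) z).trans
      (congrArg Prod.fst hcrt),
    (RingHom.congr_fun (RingHom.ext_zmod _ ((RingHom.snd _ _).comp crt)) z).trans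
      (congrArg Prod.snd hcrt)⟩

end ZMod

open ZMod

lemma cMat_one_zero (N : ℕ) (δ φ : ZMod N) : cMat N δ φ 1 0 = 1 := by
  simp [cMat, one_fin_two]

lemma map_cMat {M N : ℕ} (h : M ∣ N) (δ φ a b : ZMod N) :
    (cMat N δ φ a b).map (castHom h (ZMod M)) =
      cMat M (castHom h _ δ) (castHom h _ φ) (castHom h _ a) (castHom h _ b) := by
  ext i j
  fin_cases i <;> fin_cases j <;> simp [cMat, -castHom_apply]

lemma castHom_det_cMat {M N : ℕ} (h : M ∣ N) (δ φ a b : ZMod N) :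
    castHom h (ZMod M) (cMat N δ φ a b).det =
      (cMat M (castHom h _ δ) (castHom h _ φ) (castHom h _ a) (castHom h _ b)).det := by
  rw [RingHom.map_det, RingHom.mapMatrix_apply, map_cMat]

lemma exists_cMat_lift {M m N : ℕ} [NeZero N] (hcop : M.Coprime m) (hdvd : M * m ∣ N)
    (hcover : ∀ q, q.Prime → q ∣ N → q ∣ M ∨ q ∣ m) (δ φ : ZMod N) (a₀ b₀ : ZMod M)
    (hdet : IsUnit (cMat M (castHom (dvd_of_mul_right_dvd hdvd) _ δ)
      (castHom (dvd_of_mul_right_dvd hdvd) _ φ) a₀ b₀).det) :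
    ∃ a b : ZMod N, castHom (dvd_of_mul_right_dvd hdvd) _ a = a₀ ∧
      castHom (dvd_of_mul_right_dvd hdvd) _ b = b₀ ∧ IsUnit (cMat N δ φ a b).det := by
  obtain ⟨a, ha₀, ha₁⟩ := exists_castHom_eq_of_coprime hcop hdvd a₀ 1
  obtain ⟨b, hb₀, hb₁⟩ := exists_castHom_eq_of_coprime hcop hdvd b₀ 0
  refine ⟨a, b, ha₀, hb₀, isUnit_of_forall_prime_dvd _ fun q hq hqN => ?_⟩
  have : Fact q.Prime := ⟨hq⟩
  have castHom_trans {k : ℕ} (hqk : q ∣ k) (hkN : k ∣ N) (x : ZMod N) :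
      castHom hqN (ZMod q) x = castHom hqk _ (castHom hkN _ x) := by
    rw [← RingHom.comp_apply, castHom_comp]
  rcases hcover q hq hqN with hqM | hqm
  · rw [castHom_det_cMat, castHom_trans hqM (dvd_of_mul_right_dvd hdvd) a,
      castHom_trans hqM (dvd_of_mul_right_dvd hdvd) b, ha₀, hb₀]
    have := (hdet.map (castHom hqM (ZMod q))).ne_zero
    rwa [castHom_det_cMat, ← castHom_trans, ← castHom_trans] at this
  · rw [castHom_det_cMat, castHom_trans hqm (dvd_of_mul_left_dvd hdvd) a,
      castHom_trans hqm (dvd_of_mul_left_dvd hdvd) b, ha₁, hb₁, map_one, map_zero,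
      cMat_one_zero, det_one]
    exact one_ne_zero

section Reduction

variable {M N : ℕ}

lemma coe_map_castHom (h : M ∣ N) (g : GL (Fin 2) (ZMod N)) :
    (GeneralLinearGroup.map (castHom h (ZMod M)) g : Matrix (Fin 2) (Fin 2) (ZMod M)) =
      (g : Matrix (Fin 2) (Fin 2) (ZMod N)).map (castHom h _) :=
  rfl

lemma image_cartanSet_subset (h : M ∣ N) (δ φ : ZMod N) :
    GeneralLinearGroup.map (castHom h (ZMod M)) '' cartanSet N δ φ ⊆
      cartanSet M (castHom h _ δ) (castHom h _ φ) := by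
  rintro _ ⟨g, ⟨a, b, hg⟩, rfl⟩
  exact ⟨_, _, by rw [coe_map_castHom, hg, map_cMat]⟩

lemma cartanSet_subset_image {m : ℕ} [NeZero N] (hcop : M.Coprime m) (hdvd : M * m ∣ N)
    (hcover : ∀ q, q.Prime → q ∣ N → q ∣ M ∨ q ∣ m) (δ φ : ZMod N) :
    cartanSet M (castHom (dvd_of_mul_right_dvd hdvd) _ δ)
        (castHom (dvd_of_mul_right_dvd hdvd) _ φ) ⊆
      GeneralLinearGroup.map (castHom (dvd_of_mul_right_dvd hdvd) (ZMod M)) ''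
        cartanSet N δ φ := by
  rintro g ⟨a₀, b₀, hg⟩
  obtain ⟨a, b, rfl, rfl, hdet⟩ :=
    exists_cMat_lift hcop hdvd hcover δ φ a₀ b₀ (hg ▸ isUnits_det_units g)
  have hunit := (isUnit_iff_isUnit_det _).mpr hdet
  refine ⟨hunit.unit, ⟨a, b, rfl⟩, Units.ext ?_⟩
  rw [coe_map_castHom, IsUnit.unit_spec, map_cMat, hg]

lemma image_setOf_eq_c₁ (h : M ∣ N) (φ : ZMod N) :
    GeneralLinearGroup.map (castHom h (ZMod M)) ''
        {g : GL (Fin 2) (ZMod N) | (g : Matrix (Fin 2) (Fin 2) (ZMod N)) = !![-1, 0; φ, 1]} =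
      {g : GL (Fin 2) (ZMod M) |
        (g : Matrix (Fin 2) (Fin 2) (ZMod M)) = !![-1, 0; castHom h _ φ, 1]} := by
  have hmap : (!![-1, 0; φ, 1] : Matrix (Fin 2) (Fin 2) (ZMod N)).map (castHom h (ZMod M)) =
      !![-1, 0; castHom h _ φ, 1] := by
    ext i j
    fin_cases i <;> fin_cases j <;> simp [-castHom_apply]
  ext g
  constructor
  · rintro ⟨g, hg, rfl⟩
    rw [Set.mem_ofPred_eq, coe_map_castHom, hg, hmap]
  · intro hg
    have hunit : IsUnit (!![-1, 0; φ, 1] : Matrix (Fin 2) (Fin 2) (ZMod N)) := by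
      simp [isUnit_iff_isUnit_det, det_fin_two_of]
    refine ⟨hunit.unit, hunit.unit_spec, Units.ext ?_⟩
    rw [coe_map_castHom, IsUnit.unit_spec, hmap, hg]

lemma map_normalizerGroup {m : ℕ} [NeZero N] (hcop : M.Coprime m) (hdvd : M * m ∣ N)
    (hcover : ∀ q, q.Prime → q ∣ N → q ∣ M ∨ q ∣ m) (δ φ : ZMod N) :
    (normalizerGroup N δ φ).map
        (GeneralLinearGroup.map (castHom (dvd_of_mul_right_dvd hdvd) (ZMod M))) =
      normalizerGroup M (castHom (dvd_of_mul_right_dvd hdvd) _ δ)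
        (castHom (dvd_of_mul_right_dvd hdvd) _ φ) := by
  rw [normalizerGroup, normalizerGroup, MonoidHom.map_closure, Set.image_union,
    image_setOf_eq_c₁, (image_cartanSet_subset _ δ φ).antisymm
      (cartanSet_subset_image hcop hdvd hcover δ φ)]

end Reduction

theorem normalizer_reduction_surjective (N : ℕ) (hN : 2 ≤ N) (δ φ : ℤ)
    (p : ℕ) (hp : p.Prime) (e : ℕ) (he : 1 ≤ e) (hdvd : p ^ e ∣ N) :
    Subgroup.map (Matrix.GeneralLinearGroup.map (ZMod.castHom hdvd (ZMod (p ^ e))))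
        (normalizerGroup N (δ : ZMod N) (φ : ZMod N)) =
      normalizerGroup (p ^ e) (δ : ZMod (p ^ e)) (φ : ZMod (p ^ e)) := by
  have hN0 : N ≠ 0 := by omega
  have : NeZero N := ⟨hN0⟩
  have hcop : (p ^ e).Coprime (ordCompl[p] N) := (Nat.coprime_ordCompl hp hN0).pow_left e
  have hcover (q : ℕ) (hq : q.Prime) (hqN : q ∣ N) : q ∣ p ^ e ∨ q ∣ ordCompl[p] N := by
    by_cases hqp : q = p
    · exact .inl (hqp ▸ dvd_pow_self q (by omega))
    · exact .inr (Nat.dvd_ordCompl_of_dvd_not_dvd hqN ((Nat.prime_dvd_prime_iff_eq hp hq).not.mpr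
        (Ne.symm hqp)))
  simpa only [map_intCast] using map_normalizerGroup hcop
    (hcop.mul_dvd_of_dvd_of_dvd hdvd (Nat.ordCompl_dvd N p)) hcover (δ : ZMod N) φ
end

section
/- Let N ≥ 2 be an integer and let δ, φ ∈ ℤ. The group N_{δ,φ}(N) ⊆ GL(2, ℤ/Nℤ) (formed with δ, φ reduced mod N) is abelian if and only if N = 2 and either φ ≡ 0 (mod 2), or δ ≡ 0 (mod 2) and φ ≡ 1 (mod 2). Moreover, whenever N_{δ,φ}(2) is abelian, it is isomorphic to ℤ/2ℤ. -/
/-!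
If `N_{δ,φ}(N)` is abelian, `c₁` commutes with every `c(a,b)` of unit determinant, which means
`2b = 0` and `φb = 0`. For `N ≥ 3` this fails: take `b = 1` if `φ` is even and `b = 2` if `φ` is
odd. Then `det c(a,b) = a² + bφa − δb²` is a monic quadratic in `a` with even linear coefficient,
so it has a non-root modulo every prime, and by the Chinese remainder theorem some `a` makes it a
unit modulo `N`; yet `2b ≠ 0` or `φb ≠ 0` modulo `N`. For `N = 2` and the admissible `(δ, φ)`, every
generator of `N_{δ,φ}(2)` is `1` or one fixed involution, so the group has order `2`.
-/

open Polynomial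

theorem ZMod.isUnit_iff_castHom_ne_zero {p k : ℕ} (hp : p.Prime) (hk : k ≠ 0) (x : ZMod (p ^ k)) :
    IsUnit x ↔ ZMod.castHom (dvd_pow_self p hk) (ZMod p) x ≠ 0 := by
  have : NeZero (p ^ k) := ⟨pow_ne_zero k hp.ne_zero⟩
  rw [← ZMod.natCast_zmod_val x, ZMod.isUnit_natCast_iff_not_dvd_pow hp (Nat.pos_of_ne_zero hk),
    map_natCast, Ne, ZMod.natCast_eq_zero_iff]

theorem ZMod.exists_isUnit_aeval_of_forall_prime (P : ℤ[X]) {N : ℕ} (hN : N ≠ 0)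
    (h : ∀ p : ℕ, p.Prime → p ∣ N → ∃ a : ZMod p, aeval a P ≠ 0) :
    ∃ a : ZMod N, IsUnit (aeval a P) := by
  induction N using Nat.recOnPrimeCoprime with
  | zero => exact absurd rfl hN
  | prime_pow p k hp =>
    rcases eq_or_ne k 0 with rfl | hk
    · rw [pow_zero]; exact ⟨0, isUnit_of_subsingleton _⟩
    obtain ⟨a, ha⟩ := h p hp (dvd_pow_self p hk)
    obtain ⟨x, rfl⟩ := ZMod.ringHom_surjective (ZMod.castHom (dvd_pow_self p hk) (ZMod p)) a
    refine ⟨x, (ZMod.isUnit_iff_castHom_ne_zero hp hk _).mpr ?_⟩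
    simpa [aeval_def] using ha
  | coprime A B _ _ hAB ihA ihB =>
    obtain ⟨a, ha⟩ := ihA (left_ne_zero_of_mul hN) fun p hp hpA => h p hp (hpA.mul_right B)
    obtain ⟨b, hb⟩ := ihB (right_ne_zero_of_mul hN) fun p hp hpB => h p hp (hpB.mul_left A)
    let e := ZMod.chineseRemainder hAB
    refine ⟨e.symm (a, b), ?_⟩
    rw [← MulEquiv.isUnit_map e, Prod.isUnit_iff]
    have hfst (y) : (e y).1 = (RingHom.fst _ _).comp e.toRingHom y := rfl
    have hsnd (y) : (e y).2 = (RingHom.snd _ _).comp e.toRingHom y := rfl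
    simp only [aeval_def, hfst, hsnd]
    simpa [aeval_def] using And.intro ha hb

-- The second difference of a monic quadratic is `2`.
theorem exists_quadratic_ne_zero {R : Type*} [CommRing R] (β γ : R)
    (h : (2 : R) ≠ 0 ∨ 1 + β ≠ 0) : ∃ a : R, a ^ 2 + β * a + γ ≠ 0 := by
  by_contra! hq
  have h0 := hq 0
  have h1 := hq 1
  have h2 := hq 2
  refine h.elim (fun h' => h' ?_) (fun h' => h' ?_)
  · linear_combination h2 - 2 * h1 + h0
  · linear_combination h1 - h0

theorem ZMod.exists_isUnit_quadratic {N : ℕ} (hN : N ≠ 0) {β : ℤ} (hβ : Even β) (γ : ℤ) :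
    ∃ a : ZMod N, IsUnit (a ^ 2 + β * a + γ) := by
  obtain ⟨a, ha⟩ := ZMod.exists_isUnit_aeval_of_forall_prime (X ^ 2 + C β * X + C γ) hN
    fun p hp _ => by
      have : Fact p.Prime := ⟨hp⟩
      obtain ⟨a, ha⟩ := exists_quadratic_ne_zero (β : ZMod p) γ <| by
        refine or_iff_not_imp_left.mpr fun h2 => ?_
        obtain ⟨k, rfl⟩ := hβ
        simp [← two_mul, not_not.mp h2]
      exact ⟨a, by simpa using ha⟩
  exact ⟨a, by simpa using ha⟩

theorem det_cMat (N : ℕ) (δ φ a b : ZMod N) :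
    (cMat N δ φ a b).det = a ^ 2 + b * φ * a - δ * b ^ 2 := by
  rw [cMat, Matrix.det_fin_two_of]; ring

theorem exists_isUnit_det_cMat {N : ℕ} (hN : N ≠ 0) (δ φ b : ℤ) (h : Even (b * φ)) :
    ∃ a : ZMod N, IsUnit (cMat N δ φ a b).det := by
  obtain ⟨a, ha⟩ := ZMod.exists_isUnit_quadratic hN h (-(δ * b ^ 2))
  exact ⟨a, by rw [det_cMat]; push_cast at ha; convert ha using 1; ring⟩

theorem commute_cMat_iff (N : ℕ) (δ φ a b : ZMod N) :
    Commute (cMat N δ φ a b) !![-1, 0; φ, 1] ↔ 2 * b = 0 ∧ φ * b = 0 := by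
  simp only [Commute, SemiconjBy, cMat, Matrix.mul_fin_two, EmbeddingLike.apply_eq_iff_eq,
    Matrix.vecCons_inj, and_true]
  constructor
  · rintro ⟨⟨-, hb⟩, -, hφb⟩
    exact ⟨by linear_combination hb, by linear_combination -hφb⟩
  · rintro ⟨h2b, hφb⟩
    exact ⟨⟨by linear_combination hφb, by linear_combination h2b⟩,
      by linear_combination -δ * h2b - φ * hφb, by linear_combination -hφb⟩

theorem exists_isUnit_det_cMat_not_commute {N : ℕ} (hN : 3 ≤ N) (δ φ : ℤ) :
    ∃ a b : ZMod N, IsUnit (cMat N δ φ a b).det ∧ ¬ Commute (cMat N δ φ a b) !![-1, 0; φ, 1] := by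
  simp only [commute_cMat_iff]
  rcases Int.even_or_odd φ with hφ | hφ
  · obtain ⟨a, ha⟩ := exists_isUnit_det_cMat (N := N) (by omega) δ φ 1 (by simpa using hφ)
    refine ⟨a, 1, by simpa using ha, fun ⟨h2, _⟩ => ?_⟩
    have hN2 : N ∣ 2 := (ZMod.natCast_eq_zero_iff 2 N).mp (by simpa using h2)
    exact absurd (Nat.le_of_dvd two_pos hN2) (by omega)
  · obtain ⟨a, ha⟩ := exists_isUnit_det_cMat (N := N) (by omega) δ φ 2 (even_two.mul_right φ)
    refine ⟨a, 2, by simpa using ha, fun ⟨h4, h2φ⟩ => ?_⟩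
    have hN4 : N ∣ 4 := (ZMod.natCast_eq_zero_iff 4 N).mp (by norm_num at h4; exact_mod_cast h4)
    have hN2φ : (N : ℤ) ∣ φ * 2 := (ZMod.intCast_zmod_eq_zero_iff_dvd _ N).mp (by simpa using h2φ)
    have : N ≤ 4 := Nat.le_of_dvd four_pos hN4
    interval_cases N
    · omega
    · obtain ⟨k, rfl⟩ := hφ
      omega

theorem c₁_mul_self (N : ℕ) (φ : ZMod N) :
    (!![-1, 0; φ, 1] : Matrix (Fin 2) (Fin 2) (ZMod N)) * !![-1, 0; φ, 1] = 1 := by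
  simp [Matrix.one_fin_two]

def c₁ (N : ℕ) (φ : ZMod N) : GL (Fin 2) (ZMod N) :=
  ⟨!![-1, 0; φ, 1], !![-1, 0; φ, 1], c₁_mul_self N φ, c₁_mul_self N φ⟩

theorem commute_cMat_of_comm {N : ℕ} {δ φ : ZMod N}
    (hcomm : ∀ x ∈ normalizerGroup N δ φ, ∀ y ∈ normalizerGroup N δ φ, x * y = y * x)
    {a b : ZMod N} (hdet : IsUnit (cMat N δ φ a b).det) :
    Commute (cMat N δ φ a b) !![-1, 0; φ, 1] := by
  have hA := (Matrix.isUnit_iff_isUnit_det _).mpr hdet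
  have h := hcomm hA.unit (Subgroup.subset_closure (Or.inl ⟨a, b, hA.unit_spec⟩))
    (c₁ N φ) (Subgroup.subset_closure (Or.inr rfl))
  have h' := congrArg Units.val h
  rwa [Units.val_mul, Units.val_mul, hA.unit_spec] at h'

theorem eq_zero_or_of_forall_commute_cMat_two {δ φ : ZMod 2}
    (h : ∀ a b, IsUnit (cMat 2 δ φ a b).det → Commute (cMat 2 δ φ a b) !![-1, 0; φ, 1]) :
    φ = 0 ∨ (δ = 0 ∧ φ = 1) := by
  by_contra hc
  obtain ⟨rfl, rfl⟩ : δ = 1 ∧ φ = 1 := by clear h; revert δ φ; decide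
  have h01 := (commute_cMat_iff 2 1 1 0 1).mp (h 0 1 (by simp [det_cMat]))
  exact one_ne_zero (α := ZMod 2) (by simpa using h01.2)

theorem Subgroup.closure_eq_zpowers_of_subset {G : Type*} [Group G] {S : Set G} {u : G}
    (hS : S ⊆ {1, u}) (hu : u ∈ S) : Subgroup.closure S = Subgroup.zpowers u := by
  refine le_antisymm ((Subgroup.closure_le _).mpr fun x hx => ?_) ?_
  · rcases hS hx with rfl | rfl
    exacts [one_mem _, mem_zpowers _]
  · rw [zpowers_eq_closure]
    exact closure_mono (Set.singleton_subset_iff.mpr hu)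

theorem normalizerGroup_two_eq_zpowers {δ φ : ZMod 2} (h : φ = 0 ∨ (δ = 0 ∧ φ = 1)) :
    ∃ u, orderOf u = 2 ∧ normalizerGroup 2 δ φ = Subgroup.zpowers u := by
  obtain ⟨U, hUU, hU1, hcartan, hc₁, hU⟩ : ∃ U : Matrix (Fin 2) (Fin 2) (ZMod 2),
      U * U = 1 ∧ U ≠ 1 ∧
      (∀ a b, (cMat 2 δ φ a b).det ≠ 0 → cMat 2 δ φ a b = 1 ∨ cMat 2 δ φ a b = U) ∧
      (!![-1, 0; φ, 1] = 1 ∨ !![-1, 0; φ, 1] = U) ∧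
      ((∃ a b, U = cMat 2 δ φ a b) ∨ U = !![-1, 0; φ, 1]) := by
    rcases h with rfl | ⟨rfl, rfl⟩
    · fin_cases δ
      · exact ⟨!![1, 1; 0, 1], by decide, by decide, by decide, by decide, by decide⟩
      · exact ⟨!![0, 1; 1, 0], by decide, by decide, by decide, by decide, by decide⟩
    · exact ⟨!![1, 0; 1, 1], by decide, by decide, by decide, by decide, by decide⟩
  let u : GL (Fin 2) (ZMod 2) := ⟨U, U, hUU, hUU⟩
  have mem_of_val (g : GL (Fin 2) (ZMod 2))
      (hg : (g : Matrix (Fin 2) (Fin 2) (ZMod 2)) = 1 ∨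
        (g : Matrix (Fin 2) (Fin 2) (ZMod 2)) = U) :
      g ∈ ({1, u} : Set _) :=
    hg.imp Units.val_eq_one.mp Units.ext
  refine ⟨u, orderOf_eq_prime (Units.ext (by simp [sq, u, hUU]))
    fun h1 => hU1 (congrArg Units.val h1), Subgroup.closure_eq_zpowers_of_subset ?_ ?_⟩
  · rintro g (⟨a, b, hg⟩ | hg)
    · refine mem_of_val g (hg ▸ hcartan a b fun h0 => ?_)
      have := (Matrix.isUnit_iff_isUnit_det _).mp g.isUnit
      rw [hg, h0] at this
      exact not_isUnit_zero this
    · exact mem_of_val g (hg ▸ hc₁)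
  · exact hU.imp (fun ⟨a, b, h⟩ => ⟨a, b, h⟩) id

theorem normalizerGroup_comm_iff {N : ℕ} (hN : 2 ≤ N) (δ φ : ℤ) :
    (∀ x ∈ normalizerGroup N δ φ, ∀ y ∈ normalizerGroup N δ φ, x * y = y * x) ↔
      N = 2 ∧ ((φ : ZMod 2) = 0 ∨ ((δ : ZMod 2) = 0 ∧ (φ : ZMod 2) = 1)) := by
  constructor
  · intro hcomm
    obtain rfl : N = 2 := by
      by_contra hN2
      obtain ⟨a, b, hdet, hne⟩ := exists_isUnit_det_cMat_not_commute (show 3 ≤ N by omega) δ φ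
      exact hne (commute_cMat_of_comm hcomm hdet)
    exact ⟨rfl, eq_zero_or_of_forall_commute_cMat_two fun a b => commute_cMat_of_comm hcomm⟩
  · rintro ⟨rfl, h⟩
    obtain ⟨u, -, hu⟩ := normalizerGroup_two_eq_zpowers h
    rw [hu]
    rintro _ ⟨m, rfl⟩ _ ⟨n, rfl⟩
    exact Commute.zpow_zpow_self u m n

theorem normalizer_abelian_iff (N : ℕ) (hN : 2 ≤ N) (δ φ : ℤ) :
    ((∀ x ∈ normalizerGroup N (δ : ZMod N) (φ : ZMod N),
        ∀ y ∈ normalizerGroup N (δ : ZMod N) (φ : ZMod N), x * y = y * x) ↔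
      (N = 2 ∧ ((φ : ZMod 2) = 0 ∨ ((δ : ZMod 2) = 0 ∧ (φ : ZMod 2) = 1)))) ∧
    ((∀ x ∈ normalizerGroup N (δ : ZMod N) (φ : ZMod N),
        ∀ y ∈ normalizerGroup N (δ : ZMod N) (φ : ZMod N), x * y = y * x) →
      Nonempty (normalizerGroup N (δ : ZMod N) (φ : ZMod N) ≃* Multiplicative (ZMod 2))) := by
  refine ⟨normalizerGroup_comm_iff hN δ φ, fun hcomm => ?_⟩
  obtain ⟨rfl, h⟩ := (normalizerGroup_comm_iff hN δ φ).mp hcomm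
  obtain ⟨u, hu2, hu⟩ := normalizerGroup_two_eq_zpowers h
  rw [hu]
  exact ⟨mulEquivOfPrimeCardEq (p := 2) (by rw [Nat.card_zpowers, hu2]) (by simp)⟩
end

section
/- The field F = ℚ(ζ₈, α) is a Galois extension of ℚ, and its Galois group Gal(F/ℚ) is abelian if and only if there exists an integer t with s = t² or s = −t². -/
/-!
`F` is generated by the roots `ζ^k α` of `X⁸ - s²`, so it is Galois over `ℚ`.

If `Gal(F/ℚ)` is abelian, complex conjugation commutes with every automorphism, so
`α ᾱ = |α|²` is fixed by all of them (all conjugates of `α` are fourth roots of `-s`, hence have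
the same absolute value) and is therefore rational. Since `|α|⁴ = |s|`, the integer `|s|` is the
square of a rational, hence of an integer.

Conversely, if `s = ±t²` then `(α²/t)⁴ = 1`, so `α = ζᵐ b` with `b² = t`. Thus `F = ℚ(ζ, b)`, where
every automorphism sends `ζ` to a power of itself and `b` to `±b`; such automorphisms commute.
-/

open Polynomial IntermediateField ComplexConjugate

section Kummer

variable {F L : Type*} [Field F] [Field L] [Algebra F L] {n : ℕ} {ζ α : L} {a : F}

theorem adjoin_rootSet_X_pow_sub_C_eq [NeZero n] (hζ : IsPrimitiveRoot ζ n) (ha : a ≠ 0)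
    (hα : α ^ n = algebraMap F L a) :
    adjoin F ((X ^ n - C a).rootSet L) = adjoin F {ζ, α} := by
  have hα0 : α ≠ 0 := by
    rintro rfl
    rw [zero_pow (NeZero.ne n), eq_comm, map_eq_zero] at hα
    exact ha hα
  have mem_rootSet : ∀ x : L, x ∈ (X ^ n - C a).rootSet L ↔ x ^ n = algebraMap F L a := by
    intro x
    simp [Polynomial.mem_rootSet, X_pow_sub_C_ne_zero (NeZero.pos n), sub_eq_zero]
  apply le_antisymm
  · rw [adjoin_le_iff]
    intro x hx
    obtain ⟨i, -, hi⟩ := hζ.eq_pow_of_pow_eq_one (ξ := x / α) (by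
      rw [div_pow, (mem_rootSet x).mp hx, hα, div_self (hα ▸ pow_ne_zero n hα0)])
    rw [show x = ζ ^ i * α by rw [hi, div_mul_cancel₀ x hα0]]
    exact mul_mem (pow_mem (subset_adjoin F _ (by simp)) i) (subset_adjoin F _ (by simp))
  · have hαroot : α ∈ (X ^ n - C a).rootSet L := (mem_rootSet α).mpr hα
    have hζαroot : ζ * α ∈ (X ^ n - C a).rootSet L := by
      rw [mem_rootSet, mul_pow, hζ.pow_eq_one, one_mul, hα]
    rw [adjoin_le_iff]
    rintro x (rfl | rfl)
    · rw [← mul_div_cancel_right₀ x hα0]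
      exact div_mem (subset_adjoin F _ hζαroot) (subset_adjoin F _ hαroot)
    · exact subset_adjoin F _ hαroot

theorem isGalois_adjoin_of_isPrimitiveRoot_of_pow_eq_algebraMap (hn : (n : F) ≠ 0)
    (hζ : IsPrimitiveRoot ζ n) (ha : a ≠ 0) (hα : α ^ n = algebraMap F L a) :
    IsGalois F (adjoin F {ζ, α}) := by
  have : NeZero n := ⟨by rintro rfl; simp at hn⟩
  have hsplits : ((X ^ n - C a).map (algebraMap F L)).Splits := by
    simpa using X_pow_sub_C_splits_of_isPrimitiveRoot hζ hα
  have := adjoin_rootSet_isSplittingField hsplits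
  rw [adjoin_rootSet_X_pow_sub_C_eq hζ ha hα] at this
  exact IsGalois.of_separable_splitting_field (separable_X_pow_sub_C a hn ha)

end Kummer

theorem exists_rat_eq_norm_sq_of_commute {K : IntermediateField ℚ ℂ} [IsGalois ℚ K]
    (hK : ∀ σ τ : K ≃ₐ[ℚ] K, σ * τ = τ * σ) (x : K)
    (hx : ∀ σ : K ≃ₐ[ℚ] K, ‖(σ x : ℂ)‖ = ‖(x : ℂ)‖) : ∃ q : ℚ, (q : ℝ) = ‖(x : ℂ)‖ ^ 2 := by
  let c : K ≃ₐ[ℚ] K := (Complex.conjAe.restrictScalars ℚ).restrictNormal K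
  have hc (y : K) : (c y : ℂ) = conj (y : ℂ) :=
    AlgEquiv.restrictNormal_commutes (Complex.conjAe.restrictScalars ℚ) K y
  have hnorm (y : K) : ((y * c y : K) : ℂ) = ((‖(y : ℂ)‖ ^ 2 : ℝ) : ℂ) := by
    rw [MulMemClass.coe_mul, hc, Complex.mul_conj, Complex.normSq_eq_norm_sq]
  obtain ⟨q, hq⟩ : x * c x ∈ Set.range (algebraMap ℚ K) := by
    refine (InfiniteGalois.mem_range_algebraMap_iff_fixed _).mpr fun σ => Subtype.ext ?_
    rw [map_mul, ← AlgEquiv.mul_apply σ c, hK σ c, AlgEquiv.mul_apply, hnorm, hnorm, hx]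
  refine ⟨q, Complex.ofReal_injective ?_⟩
  rw [← hnorm, ← hq]
  simp

theorem exists_eq_sq_or_eq_neg_sq_of_abs_eq_sq {s : ℤ} {q : ℚ} (h : ((|s| : ℤ) : ℚ) = q ^ 2) :
    ∃ t : ℤ, s = t ^ 2 ∨ s = -t ^ 2 := by
  obtain ⟨t, ht⟩ := Rat.isSquare_intCast_iff.mp ⟨q, h.trans (sq q)⟩
  refine ⟨t, ?_⟩
  rcases abs_choice s with hs | hs <;> rw [hs] at ht
  · exact Or.inl (ht.trans (sq t).symm)
  · exact Or.inr (by rw [sq, ← ht, neg_neg])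

theorem exists_eq_sq_or_eq_neg_sq_of_commute {K : IntermediateField ℚ ℂ} [IsGalois ℚ K]
    (hK : ∀ σ τ : K ≃ₐ[ℚ] K, σ * τ = τ * σ) {s : ℤ} {α : ℂ} (hαK : α ∈ K)
    (hα : α ^ 4 = -(s : ℂ)) : ∃ t : ℤ, s = t ^ 2 ∨ s = -t ^ 2 := by
  have hαK4 : (⟨α, hαK⟩ : K) ^ 4 = -(s : K) := Subtype.ext (by push_cast; exact hα)
  have hconj (σ : K ≃ₐ[ℚ] K) : ‖(σ ⟨α, hαK⟩ : ℂ)‖ = ‖α‖ := by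
    refine (pow_left_inj₀ (norm_nonneg _) (norm_nonneg α) four_ne_zero).mp ?_
    rw [← norm_pow, ← norm_pow, ← SubmonoidClass.coe_pow, ← map_pow, hαK4, map_neg, map_intCast,
      hα]
    push_cast
    rfl
  obtain ⟨q, hq⟩ := exists_rat_eq_norm_sq_of_commute hK ⟨α, hαK⟩ hconj
  refine exists_eq_sq_or_eq_neg_sq_of_abs_eq_sq (q := q) (Rat.cast_injective (α := ℝ) ?_)
  rw [Rat.cast_pow, hq, ← pow_mul, ← norm_pow]
  push_cast
  simp [hα]

section Commute

variable {F E : Type*} [Field F] [Field E] [Algebra F E] (σ τ : E ≃ₐ[F] E)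

theorem AlgEquiv.commute_apply_of_isPrimitiveRoot {n : ℕ} [NeZero n] {ζ : E}
    (hζ : IsPrimitiveRoot ζ n) : σ (τ ζ) = τ (σ ζ) := by
  have hpow (ρ : E ≃ₐ[F] E) : ∃ k, ζ ^ k = ρ ζ := by
    obtain ⟨k, -, hk⟩ :=
      hζ.eq_pow_of_pow_eq_one (ξ := ρ ζ) (by rw [← map_pow, hζ.pow_eq_one, map_one])
    exact ⟨k, hk⟩
  obtain ⟨k, hk⟩ := hpow σ
  obtain ⟨l, hl⟩ := hpow τ
  rw [← hk, ← hl, map_pow, map_pow, ← hk, ← hl, ← pow_mul, ← pow_mul, mul_comm]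

theorem AlgEquiv.commute_apply_of_sq_eq_algebraMap {b : E} {c : F}
    (hb : b ^ 2 = algebraMap F E c) : σ (τ b) = τ (σ b) := by
  have hsign (ρ : E ≃ₐ[F] E) : ρ b = b ∨ ρ b = -b :=
    sq_eq_sq_iff_eq_or_eq_neg.mp (by rw [← map_pow, hb, AlgEquiv.commutes])
  rcases hsign σ with h | h <;> rcases hsign τ with h' | h' <;> simp [h, h']

end Commute

theorem exists_sq_eq_and_eq_pow_mul {E : Type*} [Field E] {ζ α t : E} (hζ : IsPrimitiveRoot ζ 8)
    (ht : t ≠ 0) (hα : α ^ 8 = t ^ 4) : ∃ (m : ℕ) (b : E), b ^ 2 = t ∧ α = ζ ^ m * b := by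
  have hζ0 : ζ ≠ 0 := hζ.ne_zero (by norm_num)
  have hα0 : α ^ 2 ≠ 0 := by
    rw [← pow_ne_zero_iff four_ne_zero, ← pow_mul, hα]
    exact pow_ne_zero 4 ht
  have hζ2 : IsPrimitiveRoot (ζ ^ 2) 4 := hζ.pow_of_dvd two_ne_zero (by norm_num)
  obtain ⟨m, -, hm⟩ := hζ2.eq_pow_of_pow_eq_one (ξ := α ^ 2 / t)
    (by rw [div_pow, ← pow_mul, hα, div_self (pow_ne_zero 4 ht)])
  refine ⟨m, α / ζ ^ m, ?_, by rw [mul_div_cancel₀ α (pow_ne_zero m hζ0)]⟩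
  rw [div_pow, ← pow_mul, mul_comm m, pow_mul, hm, div_div_cancel₀ hα0]

theorem commute_of_eq_sq_or_eq_neg_sq {s t : ℤ} (hs : s ≠ 0) (hst : s = t ^ 2 ∨ s = -t ^ 2)
    {ζ α : ℂ} (hζ : IsPrimitiveRoot ζ 8) (hα : α ^ 4 = -(s : ℂ))
    (σ τ : adjoin ℚ ({ζ, α} : Set ℂ) ≃ₐ[ℚ] adjoin ℚ ({ζ, α} : Set ℂ)) : σ * τ = τ * σ := by
  let ζ' : adjoin ℚ ({ζ, α} : Set ℂ) := ⟨ζ, subset_adjoin ℚ _ (by simp)⟩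
  let α' : adjoin ℚ ({ζ, α} : Set ℂ) := ⟨α, subset_adjoin ℚ _ (by simp)⟩
  have hζ' : IsPrimitiveRoot ζ' 8 := IsPrimitiveRoot.coe_submonoidClass_iff.mp hζ
  have ht : t ≠ 0 := by rintro rfl; rcases hst with rfl | rfl <;> simp at hs
  have hα8 : α' ^ 8 = (t : adjoin ℚ ({ζ, α} : Set ℂ)) ^ 4 := Subtype.ext (by
    push_cast
    rw [show α ^ 8 = (α ^ 4) ^ 2 by ring, hα]
    rcases hst with rfl | rfl <;> push_cast <;> ring)
  obtain ⟨m, b, hb, hαb⟩ := exists_sq_eq_and_eq_pow_mul hζ' (Int.cast_ne_zero.mpr ht) hα8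
  have hb' : b ^ 2 = algebraMap ℚ (adjoin ℚ ({ζ, α} : Set ℂ)) t := by rw [hb, map_intCast]
  refine AlgEquiv.coe_toAlgHom_injective (adjoin_algHom_ext ℚ ?_)
  rintro x (rfl | rfl)
  · exact σ.commute_apply_of_isPrimitiveRoot τ hζ'
  · change σ (τ α') = τ (σ α')
    rw [hαb]
    simp only [map_mul, map_pow, σ.commute_apply_of_isPrimitiveRoot τ hζ',
      σ.commute_apply_of_sq_eq_algebraMap τ hb']

theorem four_division_field_abelian_iff_general (s : ℤ) (hs : s ≠ 0)
    (ζ : ℂ) (hζ : IsPrimitiveRoot ζ 8) (α : ℂ) (hα : α ^ 4 = -(s : ℂ)) :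
    IsGalois ℚ (IntermediateField.adjoin ℚ ({ζ, α} : Set ℂ)) ∧
    ((∀ σ τ : IntermediateField.adjoin ℚ ({ζ, α} : Set ℂ) ≃ₐ[ℚ]
        IntermediateField.adjoin ℚ ({ζ, α} : Set ℂ), σ * τ = τ * σ) ↔
      ∃ t : ℤ, s = t ^ 2 ∨ s = -t ^ 2) := by
  have hα8 : α ^ 8 = algebraMap ℚ ℂ ((s : ℚ) ^ 2) := by
    rw [show α ^ 8 = (α ^ 4) ^ 2 by ring, hα, map_pow, map_intCast, neg_sq]
  have hGalois : IsGalois ℚ (adjoin ℚ ({ζ, α} : Set ℂ)) :=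
    isGalois_adjoin_of_isPrimitiveRoot_of_pow_eq_algebraMap (by norm_num) hζ (by positivity) hα8
  refine ⟨hGalois, fun hK => ?_, fun ⟨t, hst⟩ => commute_of_eq_sq_or_eq_neg_sq hs hst hζ hα⟩
  exact exists_eq_sq_or_eq_neg_sq_of_commute hK (subset_adjoin ℚ _ (by simp)) hα

theorem four_division_field_abelian_iff (s : ℤ) (hs : s ≠ 0)
    (hs4 : ∀ p : ℕ, p.Prime → ¬ ((p : ℤ) ^ 4 ∣ s))
    (ζ : ℂ) (hζ : IsPrimitiveRoot ζ 8) (α : ℂ) (hα : α ^ 4 = -(s : ℂ)) :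
    IsGalois ℚ (IntermediateField.adjoin ℚ ({ζ, α} : Set ℂ)) ∧
    ((∀ σ τ : IntermediateField.adjoin ℚ ({ζ, α} : Set ℂ) ≃ₐ[ℚ]
        IntermediateField.adjoin ℚ ({ζ, α} : Set ℂ), σ * τ = τ * σ) ↔
      ∃ t : ℤ, s = t ^ 2 ∨ s = -t ^ 2) :=
  four_division_field_abelian_iff_general s hs ζ hζ α hα
end

section
/- Suppose s = t² or s = −t² for some squarefree integer t with t ∉ {1, −1, 2, −2}. Then F = ℚ(ζ₈, √t), and the Galois group Gal(F/ℚ) is isomorphic to (ℤ/2ℤ)³, i.e., it is abelian of order 8 and exponent 2. -/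
/-!
Since `α ^ 8 = s ^ 2 = t ^ 4 = β ^ 8` for `β = √t`, the ratio `α / β` is an 8th root of unity,
so `ℚ(ζ₈, α) = ℚ(ζ₈, β)`. This field is the splitting field of `X ^ 8 - t ^ 4`, hence Galois.
Every automorphism squares to the identity: on `ζ₈` because `(ZMod 8)ˣ` has exponent 2, and on `β`
because it sends `β` to `±β`. Its degree is `4 * 2 = 8`, because the only rational square classes
that become squares in `ℚ(ζ₈) = ℚ(i, √2)` are those of `±1` and `±2`, and a squarefree `t`
outside `{±1, ±2}` is in none of them. Finally, a group of order 8 and exponent 2 is a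
3-dimensional `ZMod 2`-vector space.
-/

open Polynomial IntermediateField

section ExponentTwo

variable {G H : Type*} [Group G] [Group H]

abbrev commGroupOfSqEqOne (hG : ∀ g : G, g ^ 2 = 1) : CommGroup G where
  mul_comm a b := by
    have hinv (g : G) : g⁻¹ = g := inv_eq_of_mul_eq_one_right (by rw [← sq, hG])
    rw [← hinv (a * b), mul_inv_rev, hinv, hinv]

theorem nonempty_mulEquiv_of_sq_eq_one [Finite G] [Finite H] (hG : ∀ g : G, g ^ 2 = 1)
    (hH : ∀ h : H, h ^ 2 = 1) (hcard : Nat.card G = Nat.card H) : Nonempty (G ≃* H) := by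
  let := commGroupOfSqEqOne hG
  let := commGroupOfSqEqOne hH
  let := AddCommGroup.zmodModule (n := 2) (G := Additive G) fun g ↦ by
    rw [two_smul]; exact (sq g.toMul).symm.trans (hG _)
  let := AddCommGroup.zmodModule (n := 2) (G := Additive H) fun h ↦ by
    rw [two_smul]; exact (sq h.toMul).symm.trans (hH _)
  have hrank : Module.finrank (ZMod 2) (Additive G) = Module.finrank (ZMod 2) (Additive H) := by
    apply Nat.pow_right_injective (le_refl 2)
    change Nat.card (Additive G) = Nat.card (Additive H) at hcard
    rwa [Module.natCard_eq_pow_finrank (K := ZMod 2) (V := Additive G),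
      Module.natCard_eq_pow_finrank (K := ZMod 2) (V := Additive H), Nat.card_zmod] at hcard
  exact ⟨MulEquiv.toAdditive.symm (LinearEquiv.ofFinrankEq _ _ hrank).toAddEquiv⟩

end ExponentTwo

theorem Squarefree.eq_of_mul_eq_sq {t u m : ℤ} (ht : Squarefree t)
    (hu : u = 1 ∨ u = -1 ∨ u = 2 ∨ u = -2) (h : u * t = m ^ 2) : t = u := by
  obtain ⟨k, hk⟩ : ∃ k : ℤ, t = u * k ^ 2 := by
    rcases hu with rfl | rfl | rfl | rfl
    · exact ⟨m, by linarith⟩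
    · exact ⟨m, by linarith⟩
    all_goals
      obtain ⟨k, rfl⟩ : (2 : ℤ) ∣ m :=
        Int.Prime.dvd_pow' Nat.prime_two (h ▸ dvd_mul_of_dvd_left (by norm_num) _)
      exact ⟨k, by linarith⟩
  have hk1 : k ^ 2 = 1 := by
    rcases Int.isUnit_iff.mp (ht k ⟨u, by rw [hk]; ring⟩) with rfl | rfl <;> norm_num
  rw [hk, hk1, mul_one]

theorem Squarefree.eq_of_intCast_eq_mul_sq {t u : ℤ} (ht : Squarefree t)
    (hu : u = 1 ∨ u = -1 ∨ u = 2 ∨ u = -2) {r : ℚ} (h : (t : ℚ) = u * r ^ 2) : t = u := by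
  have hsq : IsSquare ((u * t : ℤ) : ℚ) := ⟨u * r, by push_cast; rw [h]; ring⟩
  obtain ⟨m, hm⟩ := Rat.isSquare_intCast_iff.mp hsq
  exact ht.eq_of_mul_eq_sq hu (hm.trans (sq m).symm)

/-- The hypotheses are the coordinates of `(a + b ζ + c ζ ^ 2 + d ζ ^ 3) ^ 2 = q` in the basis
`1, ζ, ζ ^ 2, ζ ^ 3` for a primitive 8th root of unity `ζ`, using `ζ ^ 4 = -1`. -/
theorem exists_eq_mul_sq_of_sq_coords_eq {a b c d q : ℚ}
    (h₀ : a ^ 2 - c ^ 2 - 2 * b * d = q) (h₁ : a * b = c * d)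
    (h₂ : b ^ 2 - d ^ 2 + 2 * a * c = 0) (h₃ : a * d + b * c = 0) :
    ∃ u : ℤ, (u = 1 ∨ u = -1 ∨ u = 2 ∨ u = -2) ∧ ∃ r : ℚ, q = u * r ^ 2 := by
  rcases eq_or_ne a 0 with rfl | ha
  · rcases eq_or_ne b 0 with rfl | hb
    · have hd : d = 0 := by nlinarith
      exact ⟨-1, by norm_num, c, by subst hd; push_cast; linarith⟩
    · have hc : c = 0 := (mul_eq_zero.mp (by linarith : b * c = 0)).resolve_left hb
      subst hc
      rcases mul_eq_zero.mp (by linear_combination h₂ : (b - d) * (b + d) = 0) with h | h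
      · exact ⟨-2, by norm_num, b, by push_cast; linear_combination -h₀ + 2 * b * h⟩
      · exact ⟨2, by norm_num, b, by push_cast; linear_combination -h₀ - 2 * b * h⟩
  · have hd : d = 0 := by
      have : d * (a ^ 2 + c ^ 2) = 0 := by linear_combination a * h₃ - c * h₁
      exact (mul_eq_zero.mp this).resolve_right (by positivity)
    subst hd
    have hb : b = 0 := (mul_eq_zero.mp (by linarith : a * b = 0)).resolve_left ha
    have hc : c = 0 :=
      (mul_eq_zero.mp (by linear_combination h₂ / 2 - b * hb / 2 : a * c = 0)).resolve_left ha
    exact ⟨1, by norm_num, a, by subst hb hc; push_cast; linarith⟩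

namespace IsPrimitiveRoot

variable {L : Type*} [Field L] [CharZero L] {ζ : L}

theorem minpoly_rat_eq_X_pow_four_add_one (hζ : IsPrimitiveRoot ζ 8) :
    minpoly ℚ ζ = X ^ 4 + 1 := by
  rw [← cyclotomic_eq_minpoly_rat hζ (by norm_num)]
  simpa using cyclotomic_prime_pow_eq_geom_sum (R := ℚ) (p := 2) (n := 2) Nat.prime_two

theorem rat_coeffs_eq_zero_of_eight (hζ : IsPrimitiveRoot ζ 8) {a b c d : ℚ}
    (h : (a : L) + b * ζ + c * ζ ^ 2 + d * ζ ^ 3 = 0) : a = 0 ∧ b = 0 ∧ c = 0 ∧ d = 0 := by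
  set g : ℚ[X] := C a + C b * X + C c * X ^ 2 + C d * X ^ 3
  have hg : g = 0 := by
    by_contra hg
    have hle := minpoly.degree_le_of_ne_zero ℚ ζ hg (by simpa [g] using h)
    rw [hζ.minpoly_rat_eq_X_pow_four_add_one] at hle
    have hg3 : g.degree ≤ 3 := by simp only [g]; compute_degree
    have h4 : (X ^ 4 + 1 : ℚ[X]).degree = 4 := by compute_degree!
    exact absurd (h4 ▸ hle.trans hg3) (by decide)
  refine ⟨?_, ?_, ?_, ?_⟩
  · simpa [g] using congrArg (coeff · 0) hg
  · simpa [g] using congrArg (coeff · 1) hg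
  · simpa [g] using congrArg (coeff · 2) hg
  · simpa [g] using congrArg (coeff · 3) hg

theorem exists_rat_coeffs_of_mem_adjoin_eight (hζ : IsPrimitiveRoot ζ 8) {x : L}
    (hx : x ∈ ℚ⟮ζ⟯) : ∃ a b c d : ℚ, x = a + b * ζ + c * ζ ^ 2 + d * ζ ^ 3 := by
  have hint : IsIntegral ℚ ζ := hζ.isIntegral (by norm_num) |>.tower_top
  let pb := adjoin.powerBasis hint
  have hdim : pb.dim = 4 := by
    simp only [pb, adjoin.powerBasis_dim, hζ.minpoly_rat_eq_X_pow_four_add_one]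
    compute_degree!
  obtain ⟨f, hfdeg, hf⟩ := pb.exists_eq_aeval ⟨x, hx⟩
  refine ⟨f.coeff 0, f.coeff 1, f.coeff 2, f.coeff 3, ?_⟩
  have := congrArg (algebraMap ℚ⟮ζ⟯ L) hf
  rw [← aeval_algebraMap_apply, aeval_eq_sum_range' (hdim ▸ hfdeg)] at this
  simpa [Finset.sum_range_succ, Algebra.smul_def, pb] using this

theorem finrank_adjoin_eight (hζ : IsPrimitiveRoot ζ 8) : Module.finrank ℚ ℚ⟮ζ⟯ = 4 := by
  rw [adjoin.finrank (hζ.isIntegral (by norm_num)).tower_top,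
    hζ.minpoly_rat_eq_X_pow_four_add_one]
  compute_degree!

theorem exists_eq_mul_sq_of_sq_eq_ratCast (hζ : IsPrimitiveRoot ζ 8) {x : L} (hx : x ∈ ℚ⟮ζ⟯)
    {q : ℚ} (hxq : x ^ 2 = q) :
    ∃ u : ℤ, (u = 1 ∨ u = -1 ∨ u = 2 ∨ u = -2) ∧ ∃ r : ℚ, q = u * r ^ 2 := by
  obtain ⟨a, b, c, d, rfl⟩ := hζ.exists_rat_coeffs_of_mem_adjoin_eight hx
  have hζ4 : ζ ^ 4 = -1 :=
    (hζ.pow (by norm_num) (by norm_num : 8 = 4 * 2)).eq_neg_one_of_two_right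
  have hcoords : ((a ^ 2 - c ^ 2 - 2 * b * d - q : ℚ) : L)
      + ((2 * (a * b - c * d) : ℚ)) * ζ + ((b ^ 2 - d ^ 2 + 2 * a * c : ℚ)) * ζ ^ 2
      + ((2 * (a * d + b * c) : ℚ)) * ζ ^ 3 = 0 := by
    push_cast
    linear_combination hxq - (c ^ 2 + 2 * b * d + 2 * c * d * ζ + d ^ 2 * ζ ^ 2) * hζ4
  obtain ⟨h₀, h₁, h₂, h₃⟩ := hζ.rat_coeffs_eq_zero_of_eight hcoords
  exact exists_eq_mul_sq_of_sq_coords_eq (by linarith) (by linarith) h₂ (by linarith)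

theorem sq_ne_intCast_of_mem_adjoin (hζ : IsPrimitiveRoot ζ 8) {t : ℤ} (ht : Squarefree t)
    (ht' : t ≠ 1 ∧ t ≠ -1 ∧ t ≠ 2 ∧ t ≠ -2) {x : L} (hx : x ∈ ℚ⟮ζ⟯) : x ^ 2 ≠ t := by
  intro hxt
  obtain ⟨u, hu, r, hr⟩ :=
    hζ.exists_eq_mul_sq_of_sq_eq_ratCast hx (q := t) (by simpa using hxt)
  have htu := ht.eq_of_intCast_eq_mul_sq hu hr
  obtain ⟨h1, h2, h3, h4⟩ := ht'
  rcases hu with rfl | rfl | rfl | rfl <;> contradiction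

end IsPrimitiveRoot

theorem IsPrimitiveRoot.sq_apply_eq_self_of_eight {R S : Type*} [CommRing R] [CommRing S]
    [IsDomain S] [Algebra R S] {μ : S} (hμ : IsPrimitiveRoot μ 8) (σ : S ≃ₐ[R] S) :
    (σ ^ 2) μ = μ := by
  have hsq : ∀ u : (ZMod 8)ˣ, u ^ 2 = 1 := by decide
  rw [← hμ.autToPow_spec R, map_pow, hsq, Units.val_one, ZMod.val_one_eq_one_mod,
    pow_one]

theorem AlgEquiv.sq_apply_eq_self_of_sq_eq {R S : Type*} [CommRing R] [CommRing S]
    [IsDomain S] [Algebra R S] {β : S} {a : R} (hβ : β ^ 2 = algebraMap R S a) (σ : S ≃ₐ[R] S) :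
    (σ ^ 2) β = β := by
  have : σ β ^ 2 = β ^ 2 := by rw [← map_pow, hβ, AlgEquiv.commutes]
  rw [sq, AlgEquiv.mul_apply]
  rcases sq_eq_sq_iff_eq_or_eq_neg.mp this with h | h <;> simp [h]

section AdjoinPair

variable {K L : Type*} [Field K] [Field L] [Algebra K L] {n : ℕ} [NeZero n] {ζ α β : L}

theorem mem_adjoin_pair_of_pow_eq (hζ : IsPrimitiveRoot ζ n) (hβ : β ≠ 0)
    (h : α ^ n = β ^ n) : α ∈ K⟮ζ, β⟯ := by
  have hroot : (α / β) ^ n = 1 := by rw [div_pow, h, div_self (pow_ne_zero _ hβ)]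
  obtain ⟨k, -, hk⟩ := hζ.eq_pow_of_pow_eq_one hroot
  rw [eq_div_iff hβ] at hk
  rw [← hk]
  exact mul_mem (pow_mem (subset_adjoin K _ (Set.mem_insert ζ _)) k)
    (subset_adjoin K _ (Set.mem_insert_of_mem ζ rfl))

theorem adjoin_pair_le_of_pow_eq (hζ : IsPrimitiveRoot ζ n) (hβ : β ≠ 0)
    (h : α ^ n = β ^ n) : K⟮ζ, α⟯ ≤ K⟮ζ, β⟯ := by
  rw [adjoin_le_iff, Set.insert_subset_iff, Set.singleton_subset_iff]
  exact ⟨subset_adjoin K _ (Set.mem_insert ζ _), mem_adjoin_pair_of_pow_eq hζ hβ h⟩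

theorem adjoin_pair_eq_of_pow_eq (hζ : IsPrimitiveRoot ζ n) (hβ : β ≠ 0)
    (h : α ^ n = β ^ n) : K⟮ζ, α⟯ = K⟮ζ, β⟯ := by
  have hα : α ≠ 0 := ne_zero_pow (NeZero.ne n) (h ▸ pow_ne_zero n hβ)
  exact (adjoin_pair_le_of_pow_eq hζ hβ h).antisymm (adjoin_pair_le_of_pow_eq hζ hα h.symm)

theorem isSplittingField_adjoin_pair_X_pow_sub_C (hζ : IsPrimitiveRoot ζ n) {a : K}
    (ha : a ≠ 0) (hβ : β ^ n = algebraMap K L a) : IsSplittingField K K⟮ζ, β⟯ (X ^ n - C a) := by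
  have hβ0 : β ≠ 0 := by
    rintro rfl
    rw [zero_pow (NeZero.ne n), eq_comm, map_eq_zero] at hβ
    exact ha hβ
  have hroot {x : L} : x ∈ (X ^ n - C a).rootSet L ↔ x ^ n = β ^ n := by
    rw [mem_rootSet, aeval_sub, aeval_X_pow, aeval_C, sub_eq_zero, hβ]
    exact and_iff_right (X_pow_sub_C_ne_zero (Nat.pos_of_neZero n) a)
  have hsplit : ((X ^ n - C a).map (algebraMap K L)).Splits := by
    rw [Polynomial.map_sub, Polynomial.map_pow, map_X, map_C]
    exact X_pow_sub_C_splits_of_isPrimitiveRoot hζ hβ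
  suffices hadj : adjoin K ((X ^ n - C a).rootSet L) = K⟮ζ, β⟯ from
    hadj ▸ adjoin_rootSet_isSplittingField hsplit
  refine le_antisymm
    (adjoin_le_iff.mpr fun x hx ↦ mem_adjoin_pair_of_pow_eq hζ hβ0 (hroot.mp hx)) ?_
  have hβmem : β ∈ adjoin K ((X ^ n - C a).rootSet L) := subset_adjoin K _ (hroot.mpr rfl)
  have hζβmem : ζ * β ∈ adjoin K ((X ^ n - C a).rootSet L) :=
    subset_adjoin K _ (hroot.mpr (by rw [mul_pow, hζ.pow_eq_one, one_mul]))
  rw [adjoin_le_iff, Set.insert_subset_iff, Set.singleton_subset_iff]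
  refine ⟨?_, hβmem⟩
  simpa [hβ0] using div_mem hζβmem hβmem

theorem isGalois_adjoin_pair_of_pow_eq (hn : (n : K) ≠ 0) (hζ : IsPrimitiveRoot ζ n) {a : K}
    (ha : a ≠ 0) (hβ : β ^ n = algebraMap K L a) : IsGalois K K⟮ζ, β⟯ :=
  have := isSplittingField_adjoin_pair_X_pow_sub_C hζ ha hβ
  IsGalois.of_separable_splitting_field (separable_X_pow_sub_C a hn ha)

theorem sq_eq_one_of_adjoin_pair (hζ : IsPrimitiveRoot ζ 8) {a : K}
    (hβ : β ^ 2 = algebraMap K L a) (σ : K⟮ζ, β⟯ ≃ₐ[K] K⟮ζ, β⟯) : σ ^ 2 = 1 := by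
  apply AlgEquiv.coe_toAlgHom_injective
  refine algHom_ext_of_eq_adjoin K rfl ?_
  rintro x (rfl | rfl)
  · exact (IsPrimitiveRoot.coe_submonoidClass_iff.mp hζ).sq_apply_eq_self_of_eight σ
  · exact AlgEquiv.sq_apply_eq_self_of_sq_eq (Subtype.ext hβ) σ

theorem finrank_adjoin_pair_of_sq_eq {a : K} (hβ : β ^ 2 = algebraMap K L a)
    (hne : ∀ x ∈ K⟮ζ⟯, x ^ 2 ≠ algebraMap K L a) :
    Module.finrank K K⟮ζ, β⟯ = Module.finrank K K⟮ζ⟯ * 2 := by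
  set E := K⟮ζ⟯
  have hirr : Irreducible (X ^ 2 - C (algebraMap K E a)) :=
    X_pow_sub_C_irreducible_of_prime Nat.prime_two fun b hb ↦ hne b b.2 (congrArg Subtype.val hb)
  have hint : IsIntegral E β :=
    ⟨X ^ 2 - C (algebraMap K E a), monic_X_pow_sub_C _ two_ne_zero, by simp [hβ]⟩
  have hmin : minpoly E β = X ^ 2 - C (algebraMap K E a) := .symm <|
    minpoly.eq_of_irreducible_of_monic hirr (by simp [hβ]) (monic_X_pow_sub_C _ two_ne_zero)
  have htower : (E⟮β⟯).restrictScalars K = K⟮ζ, β⟯ := by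
    rw [adjoin_adjoin_left, Set.singleton_union]
  rw [← htower]
  change Module.finrank K E⟮β⟯ = _
  rw [← Module.finrank_mul_finrank K E E⟮β⟯, adjoin.finrank hint, hmin, natDegree_X_pow_sub_C]

end AdjoinPair

theorem four_division_field_of_s_square_general (s : ℤ)
    (ζ : ℂ) (hζ : IsPrimitiveRoot ζ 8) (α : ℂ) (hα : α ^ 4 = -(s : ℂ))
    (t : ℤ) (ht : Squarefree t) (ht' : t ≠ 1 ∧ t ≠ -1 ∧ t ≠ 2 ∧ t ≠ -2)
    (hst : s = t ^ 2 ∨ s = -t ^ 2) :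
    (∀ β : ℂ, β ^ 2 = (t : ℂ) →
      IntermediateField.adjoin ℚ ({ζ, α} : Set ℂ) =
        IntermediateField.adjoin ℚ ({ζ, β} : Set ℂ)) ∧
    Nonempty ((IntermediateField.adjoin ℚ ({ζ, α} : Set ℂ) ≃ₐ[ℚ]
        IntermediateField.adjoin ℚ ({ζ, α} : Set ℂ)) ≃*
      (Multiplicative (ZMod 2) × Multiplicative (ZMod 2) × Multiplicative (ZMod 2))) := by
  have ht0 : (t : ℂ) ≠ 0 := Int.cast_ne_zero.mpr ht.ne_zero
  have hα8 : α ^ 8 = (t : ℂ) ^ 4 := by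
    have hs2 : (s : ℂ) ^ 2 = (t : ℂ) ^ 4 := by rcases hst with rfl | rfl <;> push_cast <;> ring
    linear_combination (α ^ 4 - s) * hα + hs2
  have hF (β : ℂ) (hβ : β ^ 2 = t) : ℚ⟮ζ, α⟯ = ℚ⟮ζ, β⟯ :=
    adjoin_pair_eq_of_pow_eq hζ (ne_zero_pow two_ne_zero (hβ ▸ ht0)) (by rw [hα8, ← hβ]; ring)
  refine ⟨hF, ?_⟩
  obtain ⟨β, hβ⟩ := IsAlgClosed.exists_pow_nat_eq (t : ℂ) two_pos
  rw [hF β hβ]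
  have hβℚ : β ^ 2 = algebraMap ℚ ℂ t := by rw [map_intCast, hβ]
  have hrank : Module.finrank ℚ ℚ⟮ζ, β⟯ = 8 := by
    have hne (x : ℂ) (hx : x ∈ ℚ⟮ζ⟯) : x ^ 2 ≠ algebraMap ℚ ℂ t := by
      rw [map_intCast]
      exact hζ.sq_ne_intCast_of_mem_adjoin ht ht' hx
    rw [finrank_adjoin_pair_of_sq_eq hβℚ hne, hζ.finrank_adjoin_eight]
  have : FiniteDimensional ℚ ℚ⟮ζ, β⟯ := .of_finrank_pos (by rw [hrank]; norm_num)
  have : IsGalois ℚ ℚ⟮ζ, β⟯ := isGalois_adjoin_pair_of_pow_eq (a := (t : ℚ) ^ 4) (by norm_num) hζ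
    (pow_ne_zero 4 (Int.cast_ne_zero.mpr ht.ne_zero)) (by rw [map_pow, ← hβℚ, ← pow_mul])
  refine nonempty_mulEquiv_of_sq_eq_one (sq_eq_one_of_adjoin_pair hζ hβℚ) (by decide) ?_
  rw [IsGalois.card_aut_eq_finrank, hrank]
  simp

theorem four_division_field_of_s_square (s : ℤ) (hs : s ≠ 0)
    (hs4 : ∀ p : ℕ, p.Prime → ¬ ((p : ℤ) ^ 4 ∣ s))
    (ζ : ℂ) (hζ : IsPrimitiveRoot ζ 8) (α : ℂ) (hα : α ^ 4 = -(s : ℂ))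
    (t : ℤ) (ht : Squarefree t) (ht' : t ≠ 1 ∧ t ≠ -1 ∧ t ≠ 2 ∧ t ≠ -2)
    (hst : s = t ^ 2 ∨ s = -t ^ 2) :
    (∀ β : ℂ, β ^ 2 = (t : ℂ) →
      IntermediateField.adjoin ℚ ({ζ, α} : Set ℂ) =
        IntermediateField.adjoin ℚ ({ζ, β} : Set ℂ)) ∧
    Nonempty ((IntermediateField.adjoin ℚ ({ζ, α} : Set ℂ) ≃ₐ[ℚ]
        IntermediateField.adjoin ℚ ({ζ, α} : Set ℂ)) ≃*
      (Multiplicative (ZMod 2) × Multiplicative (ZMod 2) × Multiplicative (ZMod 2))) :=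
  four_division_field_of_s_square_general s ζ hζ α hα t ht ht' hst
end

section
/- Suppose s = 2t² or s = −2t² for some squarefree integer t. Then the Galois group Gal(F/ℚ) is a non-abelian group of order 8 (isomorphic to the dihedral group of order 8). -/
/-!
Write `s = 2εt²` with `ε = ±1`. The element `w = ζ + εζ³` satisfies `w² = -2ε`, so
`α⁴ = -2εt² = (tw)²` and `α² = ±tw` lies in `ℚ(ζ)`; hence `[F : ℚ] ≤ 4 · 2`. Since `α⁸ = s²` is
rational, `F` is the splitting field of `(X⁸ - 1)(X⁸ - s²)`, so it is Galois, and as `ζ⁵ = -ζ` and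
`ζ⁷ = ζ⁻¹` are conjugates of `ζ` there are automorphisms `σ, τ` with `σ ζ = ζ⁵`, `τ ζ = ζ⁷`.
From `σ w = -w` we get `σ α = jα` with `j² = -1`, so `σ² α = -α` and `σ` has order 4; `σ` fixes
and `τ` inverts every fourth root of unity, which gives `τ² = 1` and `στσ = τ`; and `τ ∉ ⟨σ⟩`
because `σ` fixes `ζ²` while `τ` does not. So `σ, τ` generate a dihedral group of order 8 inside a
group of order at most 8.
-/

open Polynomial IntermediateField

section DihedralPresentation

variable {G : Type*} [Group G] {n : ℕ} [NeZero n] {a b : G}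

lemma pow_val_add_of_pow_eq_one (ha : a ^ n = 1) (i j : ZMod n) :
    a ^ (i + j).val = a ^ i.val * a ^ j.val := by
  rw [ZMod.val_add, ← pow_eq_pow_mod _ ha, pow_add]

lemma pow_val_sub_of_pow_eq_one (ha : a ^ n = 1) (i j : ZMod n) :
    a ^ (j - i).val = (a ^ i.val)⁻¹ * a ^ j.val := by
  have : a ^ (-i).val * a ^ i.val = 1 := by
    rw [← pow_val_add_of_pow_eq_one ha, neg_add_cancel, ZMod.val_zero, pow_zero]
  rw [sub_eq_neg_add, pow_val_add_of_pow_eq_one ha, eq_inv_of_mul_eq_one_left this]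

lemma not_commute_of_mul_mul_eq (hab : a * b * a = b) (ha : a ^ 2 ≠ 1) : ¬ Commute a b :=
  fun h ↦ ha (by rwa [h.eq, mul_assoc, ← sq, mul_eq_left] at hab)

namespace DihedralGroup

def lift (ha : a ^ n = 1) (hb : b * b = 1) (hab : a * b * a = b) : DihedralGroup n →* G where
  toFun
    | r i => a ^ i.val
    | sr i => b * a ^ i.val
  map_one' := by
    show a ^ (0 : ZMod n).val = 1
    rw [ZMod.val_zero, pow_zero]
  map_mul' := by
    have hba : SemiconjBy b a a⁻¹ := by
      rw [SemiconjBy, eq_inv_mul_iff_mul_eq, ← mul_assoc, hab]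
    have hpow (k : ℕ) : b * a ^ k = (a ^ k)⁻¹ * b := by
      rw [← inv_pow]
      exact hba.pow_right k
    have hpow_inv (k : ℕ) : b * (a ^ k)⁻¹ = a ^ k * b := by
      have := hba.inv_right.pow_right k
      rwa [inv_inv, inv_pow] at this
    rintro (i | i) (j | j)
    · show a ^ (i + j).val = a ^ i.val * a ^ j.val
      rw [pow_val_add_of_pow_eq_one ha]
    · show b * a ^ (j - i).val = a ^ i.val * (b * a ^ j.val)
      rw [pow_val_sub_of_pow_eq_one ha, ← mul_assoc, hpow_inv, mul_assoc]
    · show b * a ^ (i + j).val = b * a ^ i.val * a ^ j.val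
      rw [pow_val_add_of_pow_eq_one ha, mul_assoc]
    · show a ^ (j - i).val = b * a ^ i.val * (b * a ^ j.val)
      rw [pow_val_sub_of_pow_eq_one ha, hpow, mul_assoc, ← mul_assoc b b, hb, one_mul]

lemma lift_injective (ha : a ^ n = 1) (hb : b * b = 1) (hab : a * b * a = b)
    (hord : orderOf a = n) (hbn : b ∉ Subgroup.zpowers a) :
    Function.Injective (lift ha hb hab) := by
  rw [injective_iff_map_eq_one]
  rintro (i | i) h
  · have hdvd : orderOf a ∣ i.val := orderOf_dvd_of_pow_eq_one (h : a ^ i.val = 1)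
    rw [hord] at hdvd
    rw [(ZMod.val_eq_zero i).mp (Nat.eq_zero_of_dvd_of_lt hdvd (ZMod.val_lt i)), r_zero]
  · refine absurd ?_ hbn
    rw [eq_inv_of_mul_eq_one_left (h : b * a ^ i.val = 1)]
    exact inv_mem (Subgroup.npow_mem_zpowers a i.val)

theorem nonempty_mulEquiv_of_card_le [Finite G] (hord : orderOf a = n) (hb : b * b = 1)
    (hab : a * b * a = b) (hbn : b ∉ Subgroup.zpowers a) (hcard : Nat.card G ≤ 2 * n) :
    Nonempty (G ≃* DihedralGroup n) :=
  have hinj := lift_injective (hord ▸ pow_orderOf_eq_one a) hb hab hord hbn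
  ⟨(MulEquiv.ofBijective _ (hinj.bijective_of_nat_card_le (by rwa [nat_card]))).symm⟩

end DihedralGroup

end DihedralPresentation

section AdjoinPair

variable {F E : Type*} [Field F] [Field E] [Algebra F E]

theorem IntermediateField.normal_adjoin_of_splits {S : Set E}
    (h : ∀ x ∈ S, IsIntegral F x ∧ ((minpoly F x).map (algebraMap F (adjoin F S))).Splits) :
    Normal F (adjoin F S) := by
  have := (isAlgebraic_adjoin fun x hx ↦ (h x hx).1).isIntegral
  refine normal_iff.2 fun y ↦ ⟨Algebra.IsIntegral.isIntegral y, ?_⟩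
  rw [minpoly_eq]
  exact splits_of_mem_adjoin F E h y.2

theorem IntermediateField.normal_adjoin_pair_of_isPrimitiveRoot {n : ℕ} (hn : n ≠ 0) {ζ α : E}
    (hζ : IsPrimitiveRoot ζ n) {a : F} (hα : α ^ n = algebraMap F E a) : Normal F F⟮ζ, α⟯ := by
  have hζK : IsPrimitiveRoot (AdjoinPair.gen₁ F ζ α) n :=
    IsPrimitiveRoot.coe_submonoidClass_iff.mp hζ
  have hsplit {y : E} {b : F} (hy : y ^ n = algebraMap F E b)
      (hb : ((X ^ n - C b).map (algebraMap F F⟮ζ, α⟯)).Splits) :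
      IsIntegral F y ∧ ((minpoly F y).map (algebraMap F F⟮ζ, α⟯)).Splits := by
    have hp0 : X ^ n - C b ≠ 0 := X_pow_sub_C_ne_zero (Nat.pos_of_ne_zero hn) b
    have hy : aeval y (X ^ n - C b) = 0 := by simp [hy]
    exact ⟨⟨_, monic_X_pow_sub_C b hn, hy⟩,
      hb.of_dvd (map_ne_zero hp0) (Polynomial.map_dvd _ (minpoly.dvd F y hy))⟩
  refine normal_adjoin_of_splits (Set.forall_mem_insert.2 ⟨?_, fun y hy ↦ ?_⟩)
  · refine hsplit (b := 1) (by simp [hζ.pow_eq_one]) ?_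
    simpa using X_pow_sub_one_splits hζK
  · rw [Set.mem_singleton_iff.mp hy]
    refine hsplit hα ?_
    simpa using X_pow_sub_C_splits_of_isPrimitiveRoot hζK (α := AdjoinPair.gen₂ F ζ α)
      (a := algebraMap F F⟮ζ, α⟯ a) (Subtype.ext hα)

theorem IntermediateField.AdjoinPair.algEquiv_ext {x y : E} {f g : F⟮x, y⟯ ≃ₐ[F] F⟮x, y⟯}
    (h₁ : f (AdjoinPair.gen₁ F x y) = g (AdjoinPair.gen₁ F x y))
    (h₂ : f (AdjoinPair.gen₂ F x y) = g (AdjoinPair.gen₂ F x y)) : f = g :=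
  AlgEquiv.coe_toAlgHom_injective <| adjoin_algHom_ext F <| by
    rintro _ (rfl | rfl)
    exacts [h₁, h₂]

theorem IntermediateField.finrank_adjoin_pair_le {x y : E} (hx : IsIntegral F x) {p : F⟮x⟯[X]}
    (hp : p ≠ 0) (hpy : aeval y p = 0) :
    Module.finrank F F⟮x, y⟯ ≤ (minpoly F x).natDegree * p.natDegree := by
  have hy : IsIntegral F⟮x⟯ y := IsAlgebraic.isIntegral ⟨p, hp, hpy⟩
  have htower : Module.finrank F F⟮x, y⟯ =
      Module.finrank F F⟮x⟯ * Module.finrank F⟮x⟯ F⟮x⟯⟮y⟯ := by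
    rw [← adjoin_simple_adjoin_simple, Module.finrank_mul_finrank]
    rfl
  rw [htower, adjoin.finrank hx, adjoin.finrank hy]
  exact Nat.mul_le_mul_left _ (natDegree_le_of_dvd (minpoly.dvd _ _ hpy) hp)

end AdjoinPair

theorem IsPrimitiveRoot.exists_algEquiv_apply_eq_pow {L : Type*} [Field L] [CharZero L]
    [Normal ℚ L] {n k : ℕ} (hn : 0 < n) {z : L} (hz : IsPrimitiveRoot z n) (hk : k.Coprime n) :
    ∃ σ : L ≃ₐ[ℚ] L, σ z = z ^ k := by
  have hmin : minpoly ℚ (z ^ k) = minpoly ℚ z := by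
    rw [← cyclotomic_eq_minpoly_rat hz hn,
      ← cyclotomic_eq_minpoly_rat (hz.pow_of_coprime k hk) hn]
  exact (Normal.minpoly_eq_iff_mem_orbit L).mp hmin

theorem IsPrimitiveRoot.map_eq_pow_of_pow_eq_one {R G : Type*} [CommRing R] [IsDomain R]
    [FunLike G R R] [MonoidHomClass G R R] {n k : ℕ} [NeZero n] {z u : R}
    (hz : IsPrimitiveRoot z n) {f : G} (hf : f z = z ^ k) (hu : u ^ n = 1) : f u = u ^ k := by
  obtain ⟨m, -, rfl⟩ := hz.eq_pow_of_pow_eq_one hu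
  rw [map_pow, hf, ← pow_mul, ← pow_mul, mul_comm]

theorem IsPrimitiveRoot.pow_four_eq_neg_one {R : Type*} [CommRing R] [IsDomain R] {z : R}
    (hz : IsPrimitiveRoot z 8) : z ^ 4 = -1 :=
  (hz.pow_of_dvd (by norm_num) (by norm_num : 4 ∣ 8)).eq_neg_one_of_two_right

theorem exists_map_eq_mul_of_map_pow_eq_mul {K G : Type*} [Field K] [FunLike G K K]
    [MonoidHomClass G K K] {f : G} {x w : K} {m : ℕ} (hx : x ≠ 0) (h : f (x ^ m) = w * x ^ m) :
    ∃ r, f x = r * x ∧ r ^ m = w :=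
  ⟨f x / x, by field_simp, by
    rw [div_pow, ← map_pow, h, mul_div_cancel_right₀ _ (pow_ne_zero m hx)]⟩

namespace AlgEquiv

variable {F L : Type*} [Field F] [Field L] [Algebra F L] {z x : L} {σ τ : L ≃ₐ[F] L}

theorem orderOf_eq_four_of_apply_eq_pow_five (hz : IsPrimitiveRoot z 8) (hx : x ≠ 0)
    (hext : ∀ f g : L ≃ₐ[F] L, f z = g z → f x = g x → f = g)
    (hσz : σ z = z ^ 5) (hσx : σ (x ^ 2) = -x ^ 2) : orderOf σ = 4 := by
  obtain ⟨j, hσx, hj⟩ := exists_map_eq_mul_of_map_pow_eq_mul hx (by rw [hσx, neg_one_mul])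
  have hj8 : j ^ 8 = 1 := by rw [show 8 = 2 * 4 from rfl, pow_mul, hj]; norm_num
  have hσj : σ j = j := by
    rw [hz.map_eq_pow_of_pow_eq_one hσz hj8]; linear_combination (j ^ 3 - j) * hj
  have hσ2z : (σ ^ 2) z = z := by
    rw [pow_two, mul_apply, hσz, map_pow, hσz, ← pow_mul, pow_eq_pow_mod _ hz.pow_eq_one, pow_one]
  have hσ2x : (σ ^ 2) x = -x := by
    rw [pow_two, mul_apply, hσx, map_mul, hσj, hσx, ← mul_assoc, ← sq, hj, neg_one_mul]
  have hσ4 : σ ^ 2 ^ 2 = 1 := by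
    rw [show 2 ^ 2 = 2 + 2 from rfl, pow_add]
    exact hext _ _ (by rw [mul_apply, hσ2z, hσ2z, one_apply])
      (by rw [mul_apply, hσ2x, map_neg, hσ2x, neg_neg, one_apply])
  have hσ2 : ¬ σ ^ 2 ^ 1 = 1 := fun h ↦ by
    have hxx : -x = x := by rw [← hσ2x, ← pow_one 2, h, one_apply]
    have h2 : (2 : L) = 0 :=
      (mul_eq_zero.mp (by linear_combination -hxx : (2 : L) * x = 0)).resolve_right hx
    refine hz.pow_ne_one_of_pos_of_lt (l := 4) (by norm_num) (by norm_num) ?_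
    linear_combination hz.pow_four_eq_neg_one - h2
  exact orderOf_eq_prime_pow (p := 2) hσ2 hσ4

theorem mul_self_eq_one_of_apply_eq_pow_seven (hz : IsPrimitiveRoot z 8) (hx : x ≠ 0)
    (hext : ∀ f g : L ≃ₐ[F] L, f z = g z → f x = g x → f = g)
    (hτz : τ z = z ^ 7) (hτx : τ (x ^ 4) = x ^ 4) : τ * τ = 1 := by
  obtain ⟨u, hτx, hu⟩ := exists_map_eq_mul_of_map_pow_eq_mul hx (by rw [hτx, one_mul])
  have hτu : τ u = u ^ 7 :=
    hz.map_eq_pow_of_pow_eq_one hτz (by rw [show 8 = 4 * 2 from rfl, pow_mul, hu, one_pow])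
  refine hext _ _ ?_ ?_
  · rw [mul_apply, hτz, map_pow, hτz, ← pow_mul, pow_eq_pow_mod _ hz.pow_eq_one, one_apply,
      pow_one]
  · rw [mul_apply, hτx, map_mul, hτu, hτx, one_apply]
    linear_combination (u ^ 4 + 1) * x * hu

theorem mul_mul_eq_of_apply_eq_pow_five_of_apply_eq_pow_seven (hz : IsPrimitiveRoot z 8)
    (hx : x ≠ 0) (hext : ∀ f g : L ≃ₐ[F] L, f z = g z → f x = g x → f = g)
    (hσz : σ z = z ^ 5) (hσx : σ (x ^ 2) = -x ^ 2) (hτz : τ z = z ^ 7)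
    (hτx : τ (x ^ 4) = x ^ 4) : σ * τ * σ = τ := by
  obtain ⟨j, hσx, hj⟩ := exists_map_eq_mul_of_map_pow_eq_mul hx (by rw [hσx, neg_one_mul])
  obtain ⟨u, hτx, hu⟩ := exists_map_eq_mul_of_map_pow_eq_mul hx (by rw [hτx, one_mul])
  have hj8 : j ^ 8 = 1 := by rw [show 8 = 2 * 4 from rfl, pow_mul, hj]; norm_num
  have hu8 : u ^ 8 = 1 := by rw [show 8 = 4 * 2 from rfl, pow_mul, hu, one_pow]
  have hσj : σ j = j := by
    rw [hz.map_eq_pow_of_pow_eq_one hσz hj8]; linear_combination (j ^ 3 - j) * hj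
  have hσu : σ u = u := by
    rw [hz.map_eq_pow_of_pow_eq_one hσz hu8]; linear_combination u * hu
  have hτj : τ j = -j := by
    rw [hz.map_eq_pow_of_pow_eq_one hτz hj8]; linear_combination (j ^ 5 - j ^ 3 + j) * hj
  refine hext _ _ ?_ ?_
  · rw [mul_apply, mul_apply, hσz, map_pow, hτz, map_pow, map_pow, hσz, ← pow_mul, ← pow_mul,
      pow_eq_pow_mod _ hz.pow_eq_one]
  · rw [mul_apply, mul_apply, hσx, map_mul, hτj, hτx, map_mul, map_mul, map_neg, hσj, hσu, hσx]
    linear_combination -(u * x) * hj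

theorem notMem_zpowers_of_apply_eq_pow_five_of_apply_eq_pow_seven (hz : IsPrimitiveRoot z 8)
    (hσz : σ z = z ^ 5) (hτz : τ z = z ^ 7) :
    τ ∉ Subgroup.zpowers σ := by
  have hσ : σ ∈ MulAction.stabilizer (L ≃ₐ[F] L) (z ^ 2) := by
    rw [MulAction.mem_stabilizer_iff, AlgEquiv.smul_def, map_pow, hσz, ← pow_mul,
      pow_eq_pow_mod _ hz.pow_eq_one]
  intro hτ
  have hτ2 : τ (z ^ 2) = z ^ 2 := Subgroup.zpowers_le.mpr hσ hτ
  rw [map_pow, hτz, ← pow_mul, pow_eq_pow_mod _ hz.pow_eq_one] at hτ2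
  refine hz.pow_ne_one_of_pos_of_lt (l := 4) (by norm_num) (by norm_num) ?_
  refine mul_left_cancel₀ (pow_ne_zero 2 (hz.ne_zero (by norm_num))) ?_
  linear_combination (hτ2 : z ^ 6 = z ^ 2)

end AlgEquiv

section EighthRoots

variable {E : Type*} [Field E] [CharZero E] {z x : E} {ε : ℚ}

theorem add_mul_pow_three_sq (hz : z ^ 4 = -1) (hε : ε ^ 2 = 1) :
    (z + ε * z ^ 3) ^ 2 = -(2 * ε) := by
  have hε' : (ε : E) ^ 2 = 1 := by exact_mod_cast hε
  linear_combination (z ^ 2 + 2 * ε) * hz + z ^ 6 * hε'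

theorem exists_sq_eq_mul_add_mul_pow_three (hz : z ^ 4 = -1) (hε : ε ^ 2 = 1) {c : ℚ}
    (hx : x ^ 4 = -(2 * ε * c ^ 2)) : ∃ d : ℚ, x ^ 2 = d * (z + ε * z ^ 3) := by
  have hw := add_mul_pow_three_sq hz hε
  have : (x ^ 2 - c * (z + ε * z ^ 3)) * (x ^ 2 + c * (z + ε * z ^ 3)) = 0 := by
    linear_combination hx - c ^ 2 * hw
  rcases mul_eq_zero.mp this with h | h
  · exact ⟨c, by linear_combination h⟩
  · exact ⟨-c, by push_cast; linear_combination h⟩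

variable {d : ℚ}

theorem pow_eight_eq_of_sq_eq (hz : IsPrimitiveRoot z 8) (hε : ε ^ 2 = 1)
    (hx : x ^ 2 = d * (z + ε * z ^ 3)) : x ^ 8 = algebraMap ℚ E (4 * d ^ 4) := by
  have hw := add_mul_pow_three_sq hz.pow_four_eq_neg_one hε
  have hε' : (ε : E) ^ 2 = 1 := by exact_mod_cast hε
  rw [show x ^ 8 = (x ^ 2) ^ 4 by ring, hx, mul_pow,
    show (z + ε * z ^ 3) ^ 4 = ((z + ε * z ^ 3) ^ 2) ^ 2 by ring, hw, eq_ratCast]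
  push_cast
  linear_combination 4 * d ^ 4 * hε'

theorem normal_adjoin_pair_of_sq_eq (hz : IsPrimitiveRoot z 8) (hε : ε ^ 2 = 1)
    (hx : x ^ 2 = d * (z + ε * z ^ 3)) : Normal ℚ ℚ⟮z, x⟯ :=
  normal_adjoin_pair_of_isPrimitiveRoot (by norm_num) hz (pow_eight_eq_of_sq_eq hz hε hx)

theorem finiteDimensional_adjoin_pair_of_sq_eq (hz : IsPrimitiveRoot z 8) (hε : ε ^ 2 = 1)
    (hx : x ^ 2 = d * (z + ε * z ^ 3)) : FiniteDimensional ℚ ℚ⟮z, x⟯ :=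
  finiteDimensional_adjoin_pair (hz.isIntegral (by norm_num)).tower_top
    (.of_pow (by norm_num : 0 < 8) (pow_eight_eq_of_sq_eq hz hε hx ▸ isIntegral_algebraMap))

theorem finrank_adjoin_pair_le_eight (hz : IsPrimitiveRoot z 8)
    (hx : x ^ 2 = d * (z + ε * z ^ 3)) : Module.finrank ℚ ℚ⟮z, x⟯ ≤ 8 := by
  have hx2 : x ^ 2 ∈ ℚ⟮z⟯ := by
    have hz' := mem_adjoin_simple_self ℚ z
    rw [hx]
    exact mul_mem (SubfieldClass.ratCast_mem _ d)
      (add_mem hz' (mul_mem (SubfieldClass.ratCast_mem _ ε) (pow_mem hz' 3)))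
  have hdeg : (minpoly ℚ z).natDegree = 4 := by
    rw [← cyclotomic_eq_minpoly_rat hz (by norm_num), natDegree_cyclotomic]; rfl
  have := finrank_adjoin_pair_le ((hz.isIntegral (by norm_num)).tower_top) (y := x)
    (p := X ^ 2 - C ⟨x ^ 2, hx2⟩) (X_pow_sub_C_ne_zero (by norm_num) _) (by simp)
  rwa [hdeg, natDegree_X_pow_sub_C] at this

theorem card_algEquiv_adjoin_pair_le_eight (hz : IsPrimitiveRoot z 8) (hε : ε ^ 2 = 1)
    (hx : x ^ 2 = d * (z + ε * z ^ 3)) : Nat.card (ℚ⟮z, x⟯ ≃ₐ[ℚ] ℚ⟮z, x⟯) ≤ 8 := by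
  have := normal_adjoin_pair_of_sq_eq hz hε hx
  have := finiteDimensional_adjoin_pair_of_sq_eq hz hε hx
  have : IsGalois ℚ ℚ⟮z, x⟯ := ⟨⟩
  rw [IsGalois.card_aut_eq_finrank]
  exact finrank_adjoin_pair_le_eight hz hx

theorem exists_dihedral_generators (hz : IsPrimitiveRoot z 8) (hx0 : x ≠ 0) (hε : ε ^ 2 = 1)
    (hx : x ^ 2 = d * (z + ε * z ^ 3)) :
    ∃ σ τ : ℚ⟮z, x⟯ ≃ₐ[ℚ] ℚ⟮z, x⟯,
      orderOf σ = 4 ∧ τ * τ = 1 ∧ σ * τ * σ = τ ∧ τ ∉ Subgroup.zpowers σ := by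
  have := normal_adjoin_pair_of_sq_eq hz hε hx
  set z' := AdjoinPair.gen₁ ℚ z x
  set x' := AdjoinPair.gen₂ ℚ z x
  have hz' : IsPrimitiveRoot z' 8 := IsPrimitiveRoot.coe_submonoidClass_iff.mp hz
  have hx0' : x' ≠ 0 := fun h ↦ hx0 (congrArg Subtype.val h)
  have hx' : x' ^ 2 = d * (z' + ε * z' ^ 3) := Subtype.ext (by push_cast; exact hx)
  have hext (f g : ℚ⟮z, x⟯ ≃ₐ[ℚ] ℚ⟮z, x⟯) (h₁ : f z' = g z') (h₂ : f x' = g x') : f = g :=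
    AdjoinPair.algEquiv_ext h₁ h₂
  obtain ⟨σ, hσz⟩ := hz'.exists_algEquiv_apply_eq_pow (k := 5) (by norm_num) (by norm_num)
  obtain ⟨τ, hτz⟩ := hz'.exists_algEquiv_apply_eq_pow (k := 7) (by norm_num) (by norm_num)
  have hσx : σ (x' ^ 2) = -x' ^ 2 := by
    rw [hx', map_mul, map_ratCast, map_add, map_mul, map_ratCast, map_pow, hσz]
    linear_combination (d * (z' + ε * z' ^ 3 * (z' ^ 8 - z' ^ 4 + 1))) *
      hz'.pow_four_eq_neg_one
  have hτx : τ (x' ^ 4) = x' ^ 4 := by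
    have : x' ^ 4 = ((-(2 * ε * d ^ 2) : ℚ) : ℚ⟮z, x⟯) := by
      rw [show x' ^ 4 = (x' ^ 2) ^ 2 by ring, hx', mul_pow,
        add_mul_pow_three_sq hz'.pow_four_eq_neg_one hε]
      push_cast; ring
    rw [this, map_ratCast]
  exact ⟨σ, τ, AlgEquiv.orderOf_eq_four_of_apply_eq_pow_five hz' hx0' hext hσz hσx,
    AlgEquiv.mul_self_eq_one_of_apply_eq_pow_seven hz' hx0' hext hτz hτx,
    AlgEquiv.mul_mul_eq_of_apply_eq_pow_five_of_apply_eq_pow_seven hz' hx0' hext hσz hσx hτz hτx,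
    AlgEquiv.notMem_zpowers_of_apply_eq_pow_five_of_apply_eq_pow_seven hz' hσz hτz⟩

end EighthRoots

theorem four_division_field_of_s_twice_square_general (s : ℤ) (hs : s ≠ 0)
    (ζ : ℂ) (hζ : IsPrimitiveRoot ζ 8) (α : ℂ) (hα : α ^ 4 = -(s : ℂ))
    (t : ℤ) (hst : s = 2 * t ^ 2 ∨ s = -(2 * t ^ 2)) :
    ¬ (∀ σ τ : IntermediateField.adjoin ℚ ({ζ, α} : Set ℂ) ≃ₐ[ℚ]
        IntermediateField.adjoin ℚ ({ζ, α} : Set ℂ), σ * τ = τ * σ) ∧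
    Nonempty ((IntermediateField.adjoin ℚ ({ζ, α} : Set ℂ) ≃ₐ[ℚ]
        IntermediateField.adjoin ℚ ({ζ, α} : Set ℂ)) ≃* DihedralGroup 4) := by
  have hα0 : α ≠ 0 := by
    rintro rfl
    norm_num at hα
    exact hs hα
  obtain ⟨ε, hε, hα⟩ : ∃ ε : ℚ, ε ^ 2 = 1 ∧ α ^ 4 = -(2 * ε * (t : ℚ) ^ 2) := by
    rcases hst with rfl | rfl
    · exact ⟨1, by norm_num, by rw [hα]; push_cast; ring⟩
    · exact ⟨-1, by norm_num, by rw [hα]; push_cast; ring⟩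
  obtain ⟨d, hd⟩ := exists_sq_eq_mul_add_mul_pow_three hζ.pow_four_eq_neg_one hε hα
  have := finiteDimensional_adjoin_pair_of_sq_eq hζ hε hd
  obtain ⟨σ, τ, hσ, hτ, hστ, hτσ⟩ := exists_dihedral_generators hζ hα0 hε hd
  refine ⟨fun h ↦ not_commute_of_mul_mul_eq hστ ?_ (h σ τ),
    DihedralGroup.nonempty_mulEquiv_of_card_le hσ hτ hστ hτσ
      (card_algEquiv_adjoin_pair_le_eight hζ hε hd)⟩
  exact pow_ne_one_of_lt_orderOf (by norm_num) (by rw [hσ]; norm_num)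

theorem four_division_field_of_s_twice_square (s : ℤ) (hs : s ≠ 0)
    (hs4 : ∀ p : ℕ, p.Prime → ¬ ((p : ℤ) ^ 4 ∣ s))
    (ζ : ℂ) (hζ : IsPrimitiveRoot ζ 8) (α : ℂ) (hα : α ^ 4 = -(s : ℂ))
    (t : ℤ) (ht : Squarefree t) (hst : s = 2 * t ^ 2 ∨ s = -(2 * t ^ 2)) :
    ¬ (∀ σ τ : IntermediateField.adjoin ℚ ({ζ, α} : Set ℂ) ≃ₐ[ℚ]
        IntermediateField.adjoin ℚ ({ζ, α} : Set ℂ), σ * τ = τ * σ) ∧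
    Nonempty ((IntermediateField.adjoin ℚ ({ζ, α} : Set ℂ) ≃ₐ[ℚ]
        IntermediateField.adjoin ℚ ({ζ, α} : Set ℂ)) ≃* DihedralGroup 4) :=
  four_division_field_of_s_twice_square_general s hs ζ hζ α hα t hst
end

section
/- Let p > 3 be a prime and let δ be a unit of ℤ/pℤ. Let G be the subgroup of GL(2, ℤ/pℤ) generated by the matrix [[−1,0],[0,1]] together with the set of cubes {g³ : g ∈ C_{δ,0}(p)} of elements of the Cartan subgroup C_{δ,0}(p). Then G is not abelian. -/
theorem Matrix.two_mul_apply_zero_one_eq_zero_of_commute {R : Type*} [CommRing R]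
    {A : Matrix (Fin 2) (Fin 2) R} (h : Commute !![-1, 0; 0, 1] A) : 2 * A 0 1 = 0 := by
  have h01 := congrFun (congrFun h.eq 0) 1
  simp only [Matrix.mul_apply, Fin.sum_univ_two, Matrix.of_apply, Matrix.cons_val',
    Matrix.cons_val_zero, Matrix.cons_val_one, Matrix.empty_val', Matrix.cons_val_fin_one] at h01
  linear_combination -h01

theorem cMat_det (N : ℕ) (δ φ a b : ZMod N) :
    (cMat N δ φ a b).det = a ^ 2 + a * b * φ - δ * b ^ 2 := by
  rw [cMat, Matrix.det_fin_two_of]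
  ring

theorem cMat_zero_one_pow_three (N : ℕ) (δ : ZMod N) :
    cMat N δ 0 0 1 ^ 3 = !![0, δ; δ ^ 2, 0] := by
  rw [pow_three, cMat, Matrix.mul_fin_two, Matrix.mul_fin_two]
  simp only [mul_zero, zero_mul, add_zero, zero_add, mul_one, one_mul]
  rw [sq]

theorem ZMod.two_ne_zero_of_two_lt_s16 {p : ℕ} (hp : 2 < p) : (2 : ZMod p) ≠ 0 := by
  have h : ((2 : ℕ) : ZMod p) ≠ 0 := by
    rw [Ne, ZMod.natCast_eq_zero_iff]
    exact fun hdvd => absurd (Nat.le_of_dvd two_pos hdvd) (by omega)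
  exact_mod_cast h

theorem cartan_cubes_with_ceps_nonabelian_general (p : ℕ) (hp3 : 3 < p)
    (δ : ZMod p) (hδ : IsUnit δ) :
    ¬ (∀ x ∈ Subgroup.closure
          ({g : GL (Fin 2) (ZMod p) |
              (g : Matrix (Fin 2) (Fin 2) (ZMod p)) = !![-1, 0; 0, 1]} ∪
            {x | ∃ g ∈ cartanSet p δ 0, x = g ^ 3}),
        ∀ y ∈ Subgroup.closure
          ({g : GL (Fin 2) (ZMod p) |
              (g : Matrix (Fin 2) (Fin 2) (ZMod p)) = !![-1, 0; 0, 1]} ∪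
            {x | ∃ g ∈ cartanSet p δ 0, x = g ^ 3}),
        x * y = y * x) := by
  intro H
  have he_det : IsUnit (!![-1, 0; 0, 1] : Matrix (Fin 2) (Fin 2) (ZMod p)).det := by
    simp [Matrix.det_fin_two_of]
  have hg_det : IsUnit (cMat p δ 0 0 1).det := by simpa [cMat_det] using hδ.neg
  let e := Matrix.GeneralLinearGroup.mk'' _ he_det
  let g := Matrix.GeneralLinearGroup.mk'' _ hg_det
  have hcomm := H e (Subgroup.subset_closure (Or.inl rfl))
    (g ^ 3) (Subgroup.subset_closure (Or.inr ⟨g, ⟨0, 1, rfl⟩, rfl⟩))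
  have h2δ : 2 * δ = 0 := by
    simpa [Units.val_pow_eq_pow_val, e, g, cMat_zero_one_pow_three] using
      Matrix.two_mul_apply_zero_one_eq_zero_of_commute (congrArg Units.val hcomm)
  exact ZMod.two_ne_zero_of_two_lt_s16 (by omega) (hδ.mul_left_eq_zero.mp h2δ)

theorem cartan_cubes_with_ceps_nonabelian (p : ℕ) (hp : p.Prime) (hp3 : 3 < p)
    (δ : ZMod p) (hδ : IsUnit δ) :
    ¬ (∀ x ∈ Subgroup.closure
          ({g : GL (Fin 2) (ZMod p) |
              (g : Matrix (Fin 2) (Fin 2) (ZMod p)) = !![-1, 0; 0, 1]} ∪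
            {x | ∃ g ∈ cartanSet p δ 0, x = g ^ 3}),
        ∀ y ∈ Subgroup.closure
          ({g : GL (Fin 2) (ZMod p) |
              (g : Matrix (Fin 2) (Fin 2) (ZMod p)) = !![-1, 0; 0, 1]} ∪
            {x | ∃ g ∈ cartanSet p δ 0, x = g ^ 3}),
        x * y = y * x) :=
  cartan_cubes_with_ceps_nonabelian_general p hp3 δ hδ
end

section
/- Let ε ∈ {1,−1} and let H be the set of matrices [[a, b],[6b, a]] over ℤ/9ℤ such that a is a unit of ℤ/9ℤ and b is divisible by 3 in ℤ/9ℤ (note 6 = −3·4⁻¹ in ℤ/9ℤ). Then the subgroup of GL(2, ℤ/9ℤ) generated by the matrix [[−ε,0],[0,ε]] together with H is not abelian. -/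
/-! Conjugation by `diag(-ε, ε)` negates the off-diagonal entries of a matrix, so it commutes with
`!![1, 3; 6 * 3, 1] ∈ H` only if `3ε = -3ε`, i.e. `6ε = 0` in `ZMod 9`, which fails for `ε = ±1`. -/

open Matrix

theorem Matrix.neg_mul_eq_mul_of_commute_fin_two_diag {R : Type*} [CommRing R] (e a b c d : R)
    (h : Commute !![-e, 0; 0, e] !![a, b; c, d]) :
    -(e * b) = e * b := by
  simpa [mul_comm] using congrFun (congrFun h.eq 0) 1

theorem mod_nine_image_nonabelian (ε : ZMod 9) (hε : ε = 1 ∨ ε = -1) :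
    ¬ (∀ x ∈ Subgroup.closure
          ({g : GL (Fin 2) (ZMod 9) |
              (g : Matrix (Fin 2) (Fin 2) (ZMod 9)) = !![-ε, 0; 0, ε]} ∪
            {g | ∃ a b : ZMod 9, IsUnit a ∧ (∃ c : ZMod 9, b = 3 * c) ∧
              (g : Matrix (Fin 2) (Fin 2) (ZMod 9)) = !![a, b; 6 * b, a]}),
        ∀ y ∈ Subgroup.closure
          ({g : GL (Fin 2) (ZMod 9) |
              (g : Matrix (Fin 2) (Fin 2) (ZMod 9)) = !![-ε, 0; 0, ε]} ∪
            {g | ∃ a b : ZMod 9, IsUnit a ∧ (∃ c : ZMod 9, b = 3 * c) ∧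
              (g : Matrix (Fin 2) (Fin 2) (ZMod 9)) = !![a, b; 6 * b, a]}),
        x * y = y * x) := by
  intro h
  obtain ⟨c, hc⟩ : IsUnit !![-ε, 0; 0, ε] := by
    rw [isUnit_iff_isUnit_det, det_fin_two_of]
    rcases hε with rfl | rfl <;> decide
  obtain ⟨t, ht⟩ : IsUnit !![(1 : ZMod 9), 3; 6 * 3, 1] := by
    rw [isUnit_iff_isUnit_det, det_fin_two_of]
    decide
  have hct := h c (Subgroup.subset_closure (Or.inl hc))
    t (Subgroup.subset_closure (Or.inr ⟨1, 3, isUnit_one, ⟨1, by norm_num⟩, ht⟩))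
  have hεt := neg_mul_eq_mul_of_commute_fin_two_diag ε 1 3 (6 * 3) 1 <| by
    simpa only [Commute, SemiconjBy, Units.val_mul, hc, ht] using congrArg Units.val hct
  rcases hε with rfl | rfl <;> revert hεt <;> decide
end

section
/- Let γ'' be any matrix in GL(2, ℤ/8ℤ) that belongs to the group N_{−1,0}(8) and whose reduction modulo 4 equals one of the four matrices [[1,0],[0,−1]], [[−1,0],[0,1]], [[0,1],[1,0]], [[0,−1],[−1,0]] over ℤ/4ℤ. Then the subgroup of GL(2, ℤ/8ℤ) generated by γ'', the matrix −Id = [[−1,0],[0,−1]], the matrix 3·Id = [[3,0],[0,3]], and the matrix [[1,2],[−2,1]] is not abelian. -/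
/-- Entrywise reduction of a matrix mod 8 to a matrix mod 4. -/
def redMod4 (M : Matrix (Fin 2) (Fin 2) (ZMod 8)) : Matrix (Fin 2) (Fin 2) (ZMod 4) :=
  M.map (ZMod.castHom (show 4 ∣ 8 by norm_num) (ZMod 4))

/-!
Write `J = [[0,1],[-1,0]]`, the image of `i` in the Cartan subgroup `C_{-1,0} ≅ (ℤ[i]/N)ˣ`.
Cartan elements commute with `J` and `c₁ = diag(-1,1)` anticommutes with it, so every element of
`N_{-1,0}(N)` either commutes or anticommutes with `J`. Commuting with `J` survives reduction
mod 4, and none of the four allowed reductions commutes with `J`, so `γ''` anticommutes with `J`.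
Since `[[1,2],[-2,1]] = 1 + 2J`, commuting with it would then give `4 γ'' J = 0`, hence `4 = 0`
in `ℤ/8ℤ`.
-/

section SignedCentralizer

variable {R : Type*} [Ring R]

def signedCentralizer (j : R) : Subgroup Rˣ where
  carrier := {g | SemiconjBy (g : R) j j ∨ SemiconjBy (g : R) j (-j)}
  one_mem' := Or.inl (SemiconjBy.one_left j)
  mul_mem' := by
    rintro g h (hg | hg) (hh | hh)
    · exact Or.inl (hg.mul_left hh)
    · exact Or.inr (hg.neg_right.mul_left hh)
    · exact Or.inr (hg.mul_left hh)
    · exact Or.inl (by simpa using hg.neg_right.mul_left hh)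
  inv_mem' := by
    rintro g (hg | hg)
    · exact Or.inl hg.units_inv_symm_left
    · exact Or.inr (by simpa using hg.units_inv_symm_left.neg_right)

theorem four_eq_zero_of_anticommute_of_commute_one_add_two_mul {m j : R} (hm : IsUnit m)
    (hj : IsUnit j) (hanti : SemiconjBy m j (-j)) (hcomm : Commute m (1 + 2 * j)) :
    (4 : R) = 0 := by
  have hsum : m * j + j * m = 0 := by
    rw [hanti.eq, neg_mul, neg_add_cancel]
  have h4 : (4 : R) * (m * j) = (m * (1 + 2 * j) - (1 + 2 * j) * m) + 2 * (m * j + j * m) := by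
    noncomm_ring
  rw [hcomm.eq, sub_self, hsum, mul_zero, add_zero, (hm.mul hj).mul_left_eq_zero] at h4
  exact h4

end SignedCentralizer

/-- The image of `i` under `ℤ[i] → C_{-1,0}`: `cMat N (-1) 0 a b = a • 1 + b • gaussI (ZMod N)`. -/
def gaussI (R : Type*) [Ring R] : Matrix (Fin 2) (Fin 2) R := !![0, 1; -1, 0]

theorem normalizerGroup_neg_one_zero_le_signedCentralizer (N : ℕ) :
    normalizerGroup N (-1) 0 ≤ signedCentralizer (gaussI (ZMod N)) := by
  refine Subgroup.closure_le _ |>.mpr ?_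
  rintro g (⟨a, b, hg⟩ | hg)
  · left
    rw [SemiconjBy, hg]
    simp [cMat, gaussI]
  · right
    rw [SemiconjBy, Set.mem_ofPred_eq.mp hg]
    simp [gaussI]

theorem Commute.redMod4 {M M' : Matrix (Fin 2) (Fin 2) (ZMod 8)} (h : Commute M M') :
    Commute (redMod4 M) (redMod4 M') :=
  h.map (ZMod.castHom (show 4 ∣ 8 by norm_num) (ZMod 4)).mapMatrix

theorem redMod4_gaussI : redMod4 (gaussI (ZMod 8)) = gaussI (ZMod 4) := by
  decide

theorem isUnit_gaussI (R : Type*) [Ring R] : IsUnit (gaussI R) :=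
  ⟨⟨gaussI R, -gaussI R, by simp [gaussI, Matrix.one_fin_two],
    by simp [gaussI, Matrix.one_fin_two]⟩, rfl⟩

theorem not_commute_gaussI_mod4 {A : Matrix (Fin 2) (Fin 2) (ZMod 4)}
    (hA : A = !![1, 0; 0, -1] ∨ A = !![-1, 0; 0, 1] ∨ A = !![0, 1; 1, 0] ∨ A = !![0, -1; -1, 0]) :
    ¬ Commute A (gaussI (ZMod 4)) := by
  rcases hA with rfl | rfl | rfl | rfl <;> (rw [Commute, SemiconjBy]; decide)

theorem one_two_neg_two_one_eq_one_add_two_mul_gaussI :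
    !![(1 : ZMod 8), 2; -2, 1] = 1 + 2 * gaussI (ZMod 8) := by
  decide

theorem exists_coe_eq_one_two_neg_two_one :
    ∃ g : GL (Fin 2) (ZMod 8), (g : Matrix (Fin 2) (Fin 2) (ZMod 8)) = !![1, 2; -2, 1] :=
  ⟨Matrix.nonsingInvUnit _ (IsUnit.of_mul_eq_one 5 (by decide)), rfl⟩

theorem mod_eight_image_nonabelian (γ'' : GL (Fin 2) (ZMod 8))
    (hmem : γ'' ∈ normalizerGroup 8 (-1) 0)
    (hred : redMod4 (γ'' : Matrix (Fin 2) (Fin 2) (ZMod 8)) = !![1, 0; 0, -1] ∨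
      redMod4 (γ'' : Matrix (Fin 2) (Fin 2) (ZMod 8)) = !![-1, 0; 0, 1] ∨
      redMod4 (γ'' : Matrix (Fin 2) (Fin 2) (ZMod 8)) = !![0, 1; 1, 0] ∨
      redMod4 (γ'' : Matrix (Fin 2) (Fin 2) (ZMod 8)) = !![0, -1; -1, 0]) :
    ¬ (∀ x ∈ Subgroup.closure
          ({γ''} ∪
            {g : GL (Fin 2) (ZMod 8) |
              (g : Matrix (Fin 2) (Fin 2) (ZMod 8)) = !![-1, 0; 0, -1] ∨
              (g : Matrix (Fin 2) (Fin 2) (ZMod 8)) = !![3, 0; 0, 3] ∨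
              (g : Matrix (Fin 2) (Fin 2) (ZMod 8)) = !![1, 2; -2, 1]}),
        ∀ y ∈ Subgroup.closure
          ({γ''} ∪
            {g : GL (Fin 2) (ZMod 8) |
              (g : Matrix (Fin 2) (Fin 2) (ZMod 8)) = !![-1, 0; 0, -1] ∨
              (g : Matrix (Fin 2) (Fin 2) (ZMod 8)) = !![3, 0; 0, 3] ∨
              (g : Matrix (Fin 2) (Fin 2) (ZMod 8)) = !![1, 2; -2, 1]}),
        x * y = y * x) := by
  intro hcomm
  obtain ⟨A, hA⟩ := exists_coe_eq_one_two_neg_two_one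
  have hanti : SemiconjBy (γ'' : Matrix (Fin 2) (Fin 2) (ZMod 8)) (gaussI _) (-gaussI _) :=
    (normalizerGroup_neg_one_zero_le_signedCentralizer 8 hmem).resolve_left
      fun h ↦ not_commute_gaussI_mod4 hred (redMod4_gaussI ▸ Commute.redMod4 h)
  have hcommA : Commute (γ'' : Matrix (Fin 2) (Fin 2) (ZMod 8)) (1 + 2 * gaussI _) := by
    rw [← one_two_neg_two_one_eq_one_add_two_mul_gaussI, ← hA]
    exact congrArg Units.val <| hcomm _ (Subgroup.subset_closure (Or.inl rfl)) _
      (Subgroup.subset_closure (Or.inr (Or.inr (Or.inr hA))))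
  exact absurd (four_eq_zero_of_anticommute_of_commute_one_add_two_mul γ''.isUnit
    (isUnit_gaussI _) hanti hcommA) (by decide)
end
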